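/- arXiv:2410.23206 — 3 statements merged into one kernel-verified Lean document; each statement's English description precedes it below -/
import Mathlib

section
/- For every integer n ≥ 2 and every j with 2 ≤ j ≤ n, the descent polynomial over permutations of [n] starting with j equals the excedance polynomial over permutations of [n] starting with n+2-j: A_{n,j}(t) = AExc_{n,n+2-j}(t). -/
open Finset Polynomial

/-- Number of descents of a permutation of `Fin n`: positions `i ∈ {0,…,n-2}`
(representing `i+1 ∈ [n-1]`) with `π_i > π_{i+1}` in one-line notation. -/
def desNum {n : ℕ} (π : Equiv.Perm (Fin n)) : ℕ :=
  (Finset.univ.filter (fun i : Fin (n - 1) =>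
    π ⟨(i : ℕ) + 1, by have := i.isLt; omega⟩ < π ⟨(i : ℕ), by have := i.isLt; omega⟩)).card

/-- Number of excedances of a permutation of `Fin n`: positions with `π_i > i`. -/
def excNum {n : ℕ} (π : Equiv.Perm (Fin n)) : ℕ :=
  (Finset.univ.filter (fun i : Fin n => i < π i)).card

open Equiv

namespace SD

variable {m : ℕ}

/-- Insert: given σ : Perm (Fin m), produce π : Perm (Fin (m+1)) with π q = v and
π (q.succAbove i) = v.succAbove (σ i). -/
def ins (q v : Fin (m+1)) (σ : Perm (Fin m)) : Perm (Fin (m+1)) :=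
  (finSuccEquiv' q).trans ((Equiv.optionCongr σ).trans (finSuccEquiv' v).symm)

lemma ins_q (q v : Fin (m+1)) (σ : Perm (Fin m)) : ins q v σ q = v := by
  simp [ins, finSuccEquiv'_at, finSuccEquiv'_symm_none]

lemma ins_succAbove (q v : Fin (m+1)) (σ : Perm (Fin m)) (i : Fin m) :
    ins q v σ (q.succAbove i) = v.succAbove (σ i) := by
  simp [ins, finSuccEquiv'_succAbove, finSuccEquiv'_symm_some]

/-- Delete: inverse of ins. -/
def del (q v : Fin (m+1)) (π : Perm (Fin (m+1))) : Perm (Fin m) :=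
  Equiv.removeNone ((finSuccEquiv' q).symm.trans (π.trans (finSuccEquiv' v)))

lemma del_spec (q v : Fin (m+1)) (π : Perm (Fin (m+1))) (h : π q = v) (i : Fin m) :
    π (q.succAbove i) = v.succAbove (del q v π i) := by
  set e := (finSuccEquiv' q).symm.trans (π.trans (finSuccEquiv' v)) with he
  have h1 : e (some i) = finSuccEquiv' v (π (q.succAbove i)) := by
    simp [he, finSuccEquiv'_symm_some]
  have hne : π (q.succAbove i) ≠ v := by
    intro hc
    exact Fin.succAbove_ne q i (π.injective (hc.trans h.symm))
  obtain ⟨j, hj, rfl⟩ : ∃ j, π (q.succAbove i) = v.succAbove j ∧ del q v π i = j := by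
    obtain ⟨j, hj⟩ := Fin.exists_succAbove_eq hne
    refine ⟨j, hj.symm, ?_⟩
    have : e (some i) = some j := by rw [h1, ← hj, finSuccEquiv'_succAbove]
    exact Option.some_injective _ (by rw [show (some (del q v π i)) = e (some i) from Equiv.removeNone_some e ⟨j, this⟩, this])
  exact hj

lemma del_ins (q v : Fin (m+1)) (σ : Perm (Fin m)) : del q v (ins q v σ) = σ := by
  ext i
  have h1 := del_spec q v (ins q v σ) (ins_q q v σ) i
  rw [ins_succAbove] at h1
  exact (Fin.succAbove_right_injective (h1.symm)).symm ▸ rfl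

lemma ins_del (q v : Fin (m+1)) (π : Perm (Fin (m+1))) (h : π q = v) :
    ins q v (del q v π) = π := by
  ext x
  rcases eq_or_ne x q with rfl | hx
  · rw [ins_q, h]
  · obtain ⟨i, rfl⟩ := Fin.exists_succAbove_eq hx
    rw [ins_succAbove, ← del_spec q v π h]


variable {m : ℕ}

lemma val_succAbove (q : Fin (m+1)) (x : Fin m) :
    ((q.succAbove x : Fin (m+1)) : ℕ) = if (x:ℕ) < (q:ℕ) then (x:ℕ) else (x:ℕ)+1 := by
  rw [Fin.succAbove]
  split_ifs with h1 h2 h2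
  · rfl
  · exact absurd (by simpa [Fin.lt_def] using h1) h2
  · exact absurd (by simpa [Fin.lt_def] using h2) h1
  · rfl

lemma desNum_eq (π : Perm (Fin (m+1))) :
    desNum π = ∑ i : Fin m, if (π ⟨(i:ℕ)+1, by omega⟩ : ℕ) < (π ⟨(i:ℕ), by omega⟩ : ℕ) then 1 else 0 := by
  rw [desNum, Finset.card_filter]
  exact Finset.sum_congr rfl (fun i _ => by simp only [Fin.lt_def])

lemma excNum_eq (π : Perm (Fin m)) :
    excNum π = ∑ i : Fin m, if (i:ℕ) < (π i : ℕ) then 1 else 0 := by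
  rw [excNum, Finset.card_filter]
  exact Finset.sum_congr rfl (fun i _ => by simp only [Fin.lt_def])

end SD

namespace SD2
open SD

variable {m N : ℕ}

/-- values of a permutation as a ℕ-sequence -/
def vals (π : Perm (Fin N)) (k : ℕ) : ℕ := if h : k < N then (π ⟨k, h⟩ : ℕ) else 0

lemma vals_apply (π : Perm (Fin N)) (x : Fin N) : vals π (x : ℕ) = (π x : ℕ) := by
  rw [vals, dif_pos x.isLt]

lemma vals_lt (π : Perm (Fin N)) {k : ℕ} (hk : k < N) : vals π k < N := by
  rw [vals, dif_pos hk]; exact (π _).isLt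

lemma vals_inj (π : Perm (Fin N)) {k l : ℕ} (hk : k < N) (hl : l < N)
    (h : vals π k = vals π l) : k = l := by
  rw [vals, dif_pos hk, vals, dif_pos hl] at h
  have := π.injective (Fin.val_injective h)
  exact congrArg Fin.val this

lemma desNum_eq' (π : Perm (Fin (N+1))) :
    desNum π = ∑ i ∈ Finset.range N, if vals π (i+1) < vals π i then 1 else 0 := by
  rw [desNum, Finset.card_filter, ← Fin.sum_univ_eq_sum_range]
  refine Finset.sum_congr rfl fun i _ => ?_
  have h1 : (i:ℕ) + 1 < N + 1 := by omega
  have h2 : (i:ℕ) < N + 1 := by omega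
  rw [vals, dif_pos h1, vals, dif_pos h2]
  simp only [Fin.lt_def]

lemma excNum_eq' (π : Perm (Fin N)) :
    excNum π = ∑ i ∈ Finset.range N, if i < vals π i then 1 else 0 := by
  rw [excNum, Finset.card_filter, ← Fin.sum_univ_eq_sum_range]
  refine Finset.sum_congr rfl fun i _ => ?_
  rw [vals, dif_pos i.isLt]
  simp only [Fin.lt_def]


lemma vals_ext (π : Perm (Fin N)) (x y : Fin N) : π x = y ↔ vals π (x : ℕ) = (y : ℕ) := by
  rw [vals_apply, Fin.ext_iff]

lemma del_spec' {m : ℕ} (q v : Fin (m+1)) (π : Perm (Fin (m+1))) (h : π q = v)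
    (k : ℕ) (hk : k < m) :
    vals π (if k < (q:ℕ) then k else k+1) =
      if vals (del q v π) k < (v:ℕ) then vals (del q v π) k else vals (del q v π) k + 1 := by
  set σ := del q v π with hσ
  have e1 : ((q.succAbove ⟨k,hk⟩ : Fin (m+1)) : ℕ) = if k < (q:ℕ) then k else k+1 :=
    val_succAbove q ⟨k,hk⟩
  have e2 : vals σ k = ((σ ⟨k,hk⟩ : Fin m) : ℕ) := by rw [vals, dif_pos hk]
  calc vals π (if k < (q:ℕ) then k else k+1)
      = vals π ((q.succAbove ⟨k,hk⟩ : Fin (m+1)) : ℕ) := by rw [e1]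
    _ = ((π (q.succAbove ⟨k,hk⟩) : Fin (m+1)) : ℕ) := vals_apply π _
    _ = ((v.succAbove (σ ⟨k,hk⟩) : Fin (m+1)) : ℕ) := by rw [del_spec q v π h]
    _ = _ := by rw [val_succAbove, e2]

lemma ins_spec' {m : ℕ} (q v : Fin (m+1)) (σ : Perm (Fin m)) (k : ℕ) (hk : k < m) :
    vals (ins q v σ) (if k < (q:ℕ) then k else k+1) =
      if vals σ k < (v:ℕ) then vals σ k else vals σ k + 1 := by
  have := del_spec' q v (ins q v σ) (ins_q q v σ) k hk
  rwa [del_ins] at this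

lemma vals_ins_q {m : ℕ} (q v : Fin (m+1)) (σ : Perm (Fin m)) :
    vals (ins q v σ) (q : ℕ) = (v : ℕ) := by
  rw [← vals_ext]; exact ins_q q v σ

/-- generic deletion sum transfer -/
lemma sum_ins {m : ℕ} (q v : Fin (m+1)) (C : Perm (Fin (m+1)) → Prop) [DecidablePred C]
    (T : Perm (Fin m) → Prop) [DecidablePred T]
    (F : Perm (Fin (m+1)) → Polynomial ℚ) (G : Perm (Fin m) → Polynomial ℚ)
    (hq : ∀ π, C π → π q = v)
    (hfwd : ∀ π, C π → T (del q v π))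
    (hbwd : ∀ σ, T σ → C (ins q v σ))
    (hFG : ∀ π, C π → F π = G (del q v π)) :
    ∑ π ∈ Finset.univ.filter C, F π = ∑ σ ∈ Finset.univ.filter T, G σ := by
  refine Finset.sum_bij' (fun π _ => del q v π) (fun σ _ => ins q v σ) ?_ ?_ ?_ ?_ ?_
  · intro π hπ
    simp only [Finset.mem_filter, Finset.mem_univ, true_and] at hπ ⊢
    exact hfwd π hπ
  · intro σ hσ
    simp only [Finset.mem_filter, Finset.mem_univ, true_and] at hσ ⊢
    exact hbwd σ hσ
  · intro π hπ
    simp only [Finset.mem_filter, Finset.mem_univ, true_and] at hπ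
    exact ins_del q v π (hq π hπ)
  · intro σ _
    exact del_ins q v σ
  · intro π hπ
    simp only [Finset.mem_filter, Finset.mem_univ, true_and] at hπ
    exact hFG π hπ


/-- deletion of fixed point 0 preserves descents, given `π 0 = 0` -/
lemma des_del_00 {m : ℕ} (π : Perm (Fin (m+2))) (h : π 0 = 0) :
    desNum π = desNum (del 0 0 π) := by
  set σ := del 0 0 π with hσ
  have key : ∀ k, k < m+1 → vals π (k+1) = vals σ k + 1 := by
    intro k hk
    have := del_spec' 0 0 π h k hk
    simpa using this
  have h0 : vals π 0 = 0 := by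
    have := (vals_ext π 0 0).1 h
    simpa using this
  rw [desNum_eq', desNum_eq', Finset.sum_range_succ']
  have hlast : (if vals π (0+1) < vals π 0 then 1 else 0) = 0 := by
    rw [h0]; simp
  rw [hlast, add_zero]
  refine Finset.sum_congr rfl fun i hi => ?_
  rw [Finset.mem_range] at hi
  rw [key (i+1) (by omega), key i (by omega)]
  split_ifs <;> omega


/-- deletion of a fixed point f preserves excedances -/
lemma exc_del_fix {m : ℕ} (f : Fin (m+1)) (π : Perm (Fin (m+1))) (h : π f = f) :
    excNum π = excNum (del f f π) := by
  set σ := del f f π with hσ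
  have key : ∀ k, (hk : k < m) → vals π (if k < (f:ℕ) then k else k+1) =
      if vals σ k < (f:ℕ) then vals σ k else vals σ k + 1 := del_spec' f f π h
  have hcard : excNum π = ∑ i : Fin (m+1), if (i:ℕ) < vals π (i:ℕ) then 1 else 0 := by
    rw [excNum, Finset.card_filter]
    refine Finset.sum_congr rfl fun i _ => ?_
    rw [vals_apply]
    simp only [Fin.lt_def]
  rw [hcard, Fin.sum_univ_succAbove _ f, excNum_eq', ← Fin.sum_univ_eq_sum_range]
  have hf : vals π (f:ℕ) = (f:ℕ) := (vals_ext π f f).1 h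
  have h1 : (if ((f:ℕ)) < vals π (f:ℕ) then 1 else 0) = 0 := by rw [hf]; simp
  rw [h1, zero_add]
  refine Finset.sum_congr rfl fun i _ => ?_
  have e1 := val_succAbove f i
  rw [e1, key i i.isLt]
  split_ifs <;> omega

/-- deletion at position 0, value 1, for π with π 0 = 1 : one excedance lost -/
lemma exc_del_01 {m : ℕ} (π : Perm (Fin (m+2))) (h : π 0 = ⟨1, by omega⟩) :
    excNum π = excNum (del 0 ⟨1, by omega⟩ π) + 1 := by
  set σ := del 0 ⟨1, by omega⟩ π with hσ
  have key : ∀ k, k < m+1 → vals π (k+1) =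
      if vals σ k < 1 then vals σ k else vals σ k + 1 := by
    intro k hk
    have := del_spec' 0 ⟨1, by omega⟩ π h k hk
    rw [← hσ] at this
    simpa using this
  have h0 : vals π 0 = 1 := (vals_ext π 0 ⟨1, by omega⟩).1 h
  rw [excNum_eq', excNum_eq', Finset.sum_range_succ']
  have hz : (if 0 < vals π 0 then 1 else 0) = 1 := by rw [h0]; simp
  rw [hz, Nat.add_right_cancel_iff]
  refine Finset.sum_congr rfl fun i hi => ?_
  rw [Finset.mem_range] at hi
  rw [key i hi]
  split_ifs <;> omega

/-- deletion at position 0, value last, for π with π 0 = last : one descent lost -/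
lemma des_del_last {m : ℕ} (π : Perm (Fin (m+2))) (h : π 0 = Fin.last (m+1)) :
    desNum π = desNum (del 0 (Fin.last (m+1)) π) + 1 := by
  set σ := del 0 (Fin.last (m+1)) π with hσ
  have key : ∀ k, k < m+1 → vals π (k+1) = vals σ k := by
    intro k hk
    have h2 := del_spec' 0 (Fin.last (m+1)) π h k hk
    have h3 : vals σ k < m+1 := vals_lt σ hk
    simp only [Fin.val_last] at h2
    rw [← hσ] at h2
    simpa [h3] using h2
  have h0 : vals π 0 = m+1 := (vals_ext π 0 (Fin.last (m+1))).1 h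
  rw [desNum_eq', desNum_eq', Finset.sum_range_succ']
  have hz : (if vals π (0+1) < vals π 0 then 1 else 0) = 1 := by
    have := key 0 (by omega)
    have h4 : vals σ 0 < m+1 := vals_lt σ (by omega)
    rw [h0, zero_add, this]
    simp [h4]
  rw [hz, Nat.add_right_cancel_iff]
  refine Finset.sum_congr rfl fun i hi => ?_
  rw [Finset.mem_range] at hi
  rw [key (i+1) (by omega), key i (by omega)]


/-- deletion at position 1, value a+1, given π 0 = a, π 1 = a+1: descents preserved,
first letter preserved -/
lemma des_del_1 {m a : ℕ} (ha : a + 1 < m + 2) (π : Perm (Fin (m+2)))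
    (h0 : vals π 0 = a) (h1 : π ⟨1, by omega⟩ = ⟨a+1, ha⟩) :
    desNum π = desNum (del ⟨1, by omega⟩ ⟨a+1, ha⟩ π) ∧
      vals (del ⟨1, by omega⟩ ⟨a+1, ha⟩ π) 0 = a := by
  set σ := del ⟨1, by omega⟩ ⟨a+1, ha⟩ π with hσ
  have key : ∀ k, (hk : k < m+1) → vals π (if k < 1 then k else k+1) =
      if vals σ k < a+1 then vals σ k else vals σ k + 1 :=
    del_spec' ⟨1, by omega⟩ ⟨a+1, ha⟩ π h1
  have key0 : vals σ 0 = a := by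
    have := key 0 (by omega)
    simp only [if_pos (by omega : (0:ℕ) < 1)] at this
    rw [h0] at this
    split at this <;> omega
  have keyS : ∀ k, 1 ≤ k → k < m+1 → vals π (k+1) =
      if vals σ k < a+1 then vals σ k else vals σ k + 1 := by
    intro k hk1 hk
    have := key k hk
    rwa [if_neg (by omega)] at this
  have hv1 : vals π 1 = a + 1 := (vals_ext π ⟨1, by omega⟩ ⟨a+1, ha⟩).1 h1
  refine ⟨?_, key0⟩
  rw [desNum_eq', desNum_eq', Finset.sum_range_succ']
  have hz : (if vals π (0+1) < vals π 0 then 1 else 0) = 0 := by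
    rw [zero_add, hv1, h0]; simp
  rw [hz, add_zero]
  refine Finset.sum_congr rfl fun k hk => ?_
  rw [Finset.mem_range] at hk
  rcases Nat.eq_zero_or_pos k with rfl | hk1
  · have e2 := keyS 1 (by omega) (by omega)
    have hne : vals σ 1 ≠ vals σ 0 := fun hh => by
      have := vals_inj σ (by omega) (by omega) hh; omega
    rw [zero_add, e2, hv1, key0]
    rw [key0] at hne
    split_ifs <;> omega
  · have e2 := keyS (k+1) (by omega) (by omega)
    have e3 := keyS k (by omega) (by omega)
    rw [e2, e3]
    split_ifs <;> omega

lemma vals_swap_mul {N : ℕ} (A B : Fin N) (π : Perm (Fin N)) (k : ℕ) (hk : k < N) :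
    vals ((Equiv.swap A B) * π) k =
      if vals π k = (A:ℕ) then (B:ℕ) else if vals π k = (B:ℕ) then (A:ℕ) else vals π k := by
  rw [vals, dif_pos hk, vals, dif_pos hk, Equiv.Perm.mul_apply, Equiv.swap_apply_def]
  simp only [Fin.ext_iff]
  split_ifs <;> omega

/-- swapping values a, a+1 for π with first letter a: descents gain 1 iff π 1 = a+1 -/
lemma des_swap {m a : ℕ} (ha : a + 1 < m + 2) (π : Perm (Fin (m+2))) (h0 : vals π 0 = a) :
    desNum ((Equiv.swap ⟨a, by omega⟩ ⟨a+1, ha⟩) * π) =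
      desNum π + (if vals π 1 = a+1 then 1 else 0) := by
  set π' := (Equiv.swap (⟨a, by omega⟩ : Fin (m+2)) ⟨a+1, ha⟩) * π with hπ'
  have vkey : ∀ k, k < m+2 → vals π' k =
      if vals π k = a then a+1 else if vals π k = a+1 then a else vals π k := by
    intro k hk
    exact vals_swap_mul _ _ π k hk
  have honly : ∀ k, k < m+2 → vals π k = a → k = 0 := by
    intro k hk hv
    exact vals_inj π hk (by omega) (by rw [hv, h0])
  rw [desNum_eq', desNum_eq', Finset.sum_range_succ', Finset.sum_range_succ']
  have hterm0 : (if vals π' (0+1) < vals π' 0 then 1 else 0) =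
      (if vals π (0+1) < vals π 0 then 1 else 0) + (if vals π 1 = a+1 then 1 else 0) := by
    have e0 := vkey 0 (by omega)
    have e1 := vkey 1 (by omega)
    have hne : vals π 1 ≠ a := fun hh => by have := honly 1 (by omega) hh; omega
    rw [zero_add, e0, e1, h0]
    rw [if_pos rfl]
    split_ifs <;> omega
  have hsum : ∀ k, k < m → (if vals π' (k+1+1) < vals π' (k+1) then 1 else 0) =
      (if vals π (k+1+1) < vals π (k+1) then 1 else 0) := by
    intro k hk
    have e1 := vkey (k+1+1) (by omega)
    have e2 := vkey (k+1) (by omega)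
    have hne1 : vals π (k+1+1) ≠ a := fun hh => by have := honly (k+1+1) (by omega) hh; omega
    have hne2 : vals π (k+1) ≠ a := fun hh => by have := honly (k+1) (by omega) hh; omega
    have hne3 : vals π (k+1+1) ≠ vals π (k+1) := fun hh => by
      have := vals_inj π (by omega) (by omega) hh; omega
    rw [e1, e2]
    split_ifs <;> omega
  rw [hterm0, Finset.sum_congr rfl (fun k hk => hsum k (Finset.mem_range.1 hk))]
  omega

/-- swapping values c+1, c+2 for π with first letter c+2: excedances gain 1 iff
π fixes c+1 -/
lemma exc_swap {m c : ℕ} (hc : c + 2 < m + 2) (π : Perm (Fin (m+2))) (h0 : vals π 0 = c+2) :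
    excNum ((Equiv.swap ⟨c+1, by omega⟩ ⟨c+2, hc⟩) * π) =
      excNum π + (if vals π (c+1) = c+1 then 1 else 0) := by
  set π' := (Equiv.swap (⟨c+1, by omega⟩ : Fin (m+2)) ⟨c+2, hc⟩) * π with hπ'
  have vkey : ∀ k, k < m+2 → vals π' k =
      if vals π k = c+1 then c+2 else if vals π k = c+2 then c+1 else vals π k := by
    intro k hk
    exact vals_swap_mul _ _ π k hk
  have honly : ∀ k, k < m+2 → vals π k = c+2 → k = 0 := by
    intro k hk hv
    exact vals_inj π hk (by omega) (by rw [hv, h0])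
  rw [excNum_eq', excNum_eq']
  have hterm : ∀ i, i < m+2 → (if i < vals π' i then 1 else 0) =
      (if i < vals π i then 1 else 0) +
        (if i = c+1 then (if vals π (c+1) = c+1 then 1 else 0) else 0) := by
    intro i hi
    have e1 := vkey i hi
    rcases eq_or_ne i (c+1) with rfl | hne
    · rw [e1, if_pos rfl]
      rcases eq_or_ne (vals π (c+1)) (c+1) with he | he
      · simp [he]
      · rw [if_neg he, if_neg he]
        have : vals π (c+1) ≠ c+2 := fun hh => by have := honly (c+1) (by omega) hh; omega
        rw [if_neg this]
        omega
    · have : i ≠ 0 → vals π i ≠ c+2 := fun hi0 hh => hi0 (honly i hi hh)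
      rcases eq_or_ne i 0 with rfl | hi0
      · rw [e1, if_neg hne, h0]
        split_ifs <;> omega
      · have h2 := this hi0
        rw [e1, if_neg hne]
        split_ifs <;> omega
  rw [Finset.sum_congr rfl (fun i hi => hterm i (Finset.mem_range.1 hi)),
    Finset.sum_add_distrib, Finset.sum_ite_eq' (Finset.range (m+2)) (c+1),
    if_pos (Finset.mem_range.2 (by omega))]


noncomputable def Dtot (N : ℕ) : Polynomial ℚ := ∑ π : Perm (Fin N), X ^ desNum π
noncomputable def Etot (N : ℕ) : Polynomial ℚ := ∑ π : Perm (Fin N), X ^ excNum π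
noncomputable def Anj (m : ℕ) (a : ℕ) : Polynomial ℚ :=
  ∑ π ∈ Finset.univ.filter (fun π : Perm (Fin (m+1)) => vals π 0 = a), X ^ desNum π
noncomputable def Enj (m : ℕ) (a : ℕ) : Polynomial ℚ :=
  ∑ π ∈ Finset.univ.filter (fun π : Perm (Fin (m+1)) => vals π 0 = a), X ^ excNum π

lemma first_eq {N : ℕ} (π : Perm (Fin (N+1))) (a : ℕ) (ha : a < N+1) :
    π 0 = ⟨a, ha⟩ ↔ vals π 0 = a := by
  have := vals_ext π 0 ⟨a, ha⟩
  simpa using this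

lemma P1 (m : ℕ) : Anj (m+1) 0 = Dtot (m+1) := by
  rw [Anj, sum_ins (0 : Fin (m+2)) 0 _ (fun _ => True) _ (fun σ => X ^ desNum σ)
    (fun π hπ => (first_eq π 0 (by omega)).2 hπ)
    (fun _ _ => trivial)
    (fun σ _ => by simpa using vals_ins_q 0 0 σ)
    (fun π hπ => by rw [des_del_00 π ((first_eq π 0 (by omega)).2 hπ)])]
  rw [Dtot, Finset.filter_true_of_mem (fun _ _ => trivial)]

lemma P2 (m : ℕ) : Enj m 0 = Etot m := by
  rw [Enj, sum_ins (0 : Fin (m+1)) 0 _ (fun _ => True) _ (fun σ => X ^ excNum σ)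
    (fun π hπ => (first_eq π 0 (by omega)).2 hπ)
    (fun _ _ => trivial)
    (fun σ _ => by simpa using vals_ins_q 0 0 σ)
    (fun π hπ => by rw [exc_del_fix 0 π ((first_eq π 0 (by omega)).2 hπ)])]
  rw [Etot, Finset.filter_true_of_mem (fun _ _ => trivial)]

lemma P3 (m : ℕ) : Anj (m+1) (m+1) = X * Dtot (m+1) := by
  have hlast : (Fin.last (m+1)) = (⟨m+1, by omega⟩ : Fin (m+2)) := rfl
  rw [Anj, sum_ins (0 : Fin (m+2)) (Fin.last (m+1)) _ (fun _ => True) _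
    (fun σ => X * X ^ desNum σ)
    (fun π hπ => by rw [hlast]; exact (first_eq π (m+1) (by omega)).2 hπ)
    (fun _ _ => trivial)
    (fun σ _ => by simpa using vals_ins_q 0 (Fin.last (m+1)) σ)
    (fun π hπ => by
      rw [des_del_last π (by rw [hlast]; exact (first_eq π (m+1) (by omega)).2 hπ)]
      rw [pow_succ, mul_comm])]
  rw [Dtot, Finset.filter_true_of_mem (fun _ _ => trivial), Finset.mul_sum]

lemma P4 (m : ℕ) : Enj (m+1) 1 = X * Etot (m+1) := by
  rw [Enj, sum_ins (0 : Fin (m+2)) ⟨1, by omega⟩ _ (fun _ => True) _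
    (fun σ => X * X ^ excNum σ)
    (fun π hπ => (first_eq π 1 (by omega)).2 hπ)
    (fun _ _ => trivial)
    (fun σ _ => by simpa using vals_ins_q 0 ⟨1, by omega⟩ σ)
    (fun π hπ => by
      rw [exc_del_01 π ((first_eq π 1 (by omega)).2 hπ), pow_succ, mul_comm])]
  rw [Etot, Finset.filter_true_of_mem (fun _ _ => trivial), Finset.mul_sum]

lemma P5b (m a : ℕ) (ha : a + 1 < m + 2) :
    ∑ π ∈ Finset.univ.filter
      (fun π : Perm (Fin (m+2)) => vals π 0 = a ∧ vals π 1 = a+1), X ^ desNum π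
      = Anj m a := by
  have hq : ∀ π : Perm (Fin (m+2)), vals π 0 = a ∧ vals π 1 = a+1 →
      π ⟨1, by omega⟩ = ⟨a+1, ha⟩ := by
    intro π hπ
    exact (vals_ext π ⟨1, by omega⟩ ⟨a+1, ha⟩).2 hπ.2
  rw [Anj, sum_ins (⟨1, by omega⟩ : Fin (m+2)) ⟨a+1, ha⟩ _
    (fun σ : Perm (Fin (m+1)) => vals σ 0 = a) _ (fun σ => X ^ desNum σ)
    hq
    (fun π hπ => (des_del_1 ha π hπ.1 (hq π hπ)).2)
    (fun σ hσ => by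
      constructor
      · have := ins_spec' (⟨1, by omega⟩ : Fin (m+2)) ⟨a+1, ha⟩ σ 0 (by omega)
        simp only [if_pos (by omega : (0:ℕ) < 1)] at this
        rw [hσ, if_pos (by omega : a < a+1)] at this
        exact this
      · simpa using vals_ins_q (⟨1, by omega⟩ : Fin (m+2)) ⟨a+1, ha⟩ σ)
    (fun π hπ => by rw [(des_del_1 ha π hπ.1 (hq π hπ)).1])]

lemma P5 (m a : ℕ) (ha : a + 1 < m + 2) :
    Anj (m+1) (a+1) = Anj (m+1) a + (X - 1) * Anj m a := by
  have step1 : ∑ π ∈ Finset.univ.filter (fun π : Perm (Fin (m+2)) => vals π 0 = a),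
      X ^ (desNum π + if vals π 1 = a+1 then 1 else 0) = Anj (m+1) (a+1) := by
    rw [Anj]
    refine Finset.sum_bij' (fun π _ => (Equiv.swap ⟨a, by omega⟩ ⟨a+1, ha⟩ : Perm (Fin (m+2))) * π)
      (fun π _ => (Equiv.swap ⟨a, by omega⟩ ⟨a+1, ha⟩ : Perm (Fin (m+2))) * π) ?_ ?_ ?_ ?_ ?_
    · intro π hπ
      simp only [Finset.mem_filter, Finset.mem_univ, true_and] at hπ ⊢
      rw [vals_swap_mul _ _ π 0 (by omega), hπ]
      simp
    · intro π hπ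
      simp only [Finset.mem_filter, Finset.mem_univ, true_and] at hπ ⊢
      rw [vals_swap_mul _ _ π 0 (by omega), hπ]
      simp
    · intro π _
      rw [← mul_assoc, Equiv.swap_mul_self, one_mul]
    · intro π _
      rw [← mul_assoc, Equiv.swap_mul_self, one_mul]
    · intro π hπ
      simp only [Finset.mem_filter, Finset.mem_univ, true_and] at hπ
      rw [des_swap ha π hπ]
  rw [← step1]
  have expand : ∀ π : Perm (Fin (m+2)),
      (X : Polynomial ℚ) ^ (desNum π + if vals π 1 = a+1 then 1 else 0)
      = X ^ desNum π + (if vals π 1 = a+1 then (X - 1) * X ^ desNum π else 0) := by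
    intro π
    split_ifs
    · rw [pow_succ]; ring
    · rw [add_zero, add_zero]
  rw [Finset.sum_congr rfl (fun π _ => expand π), Finset.sum_add_distrib,
    ← Finset.sum_filter, Finset.filter_filter, ← Finset.mul_sum, P5b m a ha]
  rfl

lemma P6b (m c : ℕ) (hc : c + 2 < m + 2) :
    ∑ π ∈ Finset.univ.filter
      (fun π : Perm (Fin (m+2)) => vals π 0 = c+2 ∧ vals π (c+1) = c+1), X ^ excNum π
      = Enj m (c+1) := by
  have hq : ∀ π : Perm (Fin (m+2)), vals π 0 = c+2 ∧ vals π (c+1) = c+1 →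
      π ⟨c+1, by omega⟩ = ⟨c+1, by omega⟩ := by
    intro π hπ
    exact (vals_ext π ⟨c+1, by omega⟩ ⟨c+1, by omega⟩).2 hπ.2
  rw [Enj, sum_ins (⟨c+1, by omega⟩ : Fin (m+2)) ⟨c+1, by omega⟩ _
    (fun σ : Perm (Fin (m+1)) => vals σ 0 = c+1) _ (fun σ => X ^ excNum σ)
    hq
    (fun π hπ => by
      have := del_spec' (⟨c+1, by omega⟩ : Fin (m+2)) ⟨c+1, by omega⟩ π (hq π hπ) 0 (by omega)
      simp only [if_pos (by omega : (0:ℕ) < c+1), Fin.val_mk] at this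
      have h0 : vals π 0 = c + 2 := hπ.1
      show vals (del ⟨c+1, by omega⟩ ⟨c+1, by omega⟩ π) 0 = c + 1
      split at this <;> omega)
    (fun σ hσ => by
      constructor
      · have := ins_spec' (⟨c+1, by omega⟩ : Fin (m+2)) ⟨c+1, by omega⟩ σ 0 (by omega)
        simp only [if_pos (by omega : (0:ℕ) < c+1), Fin.val_mk] at this
        have h0 : vals σ 0 = c + 1 := hσ
        split at this <;> omega
      · simpa using vals_ins_q (⟨c+1, by omega⟩ : Fin (m+2)) ⟨c+1, by omega⟩ σ)
    (fun π hπ => by rw [exc_del_fix ⟨c+1, by omega⟩ π (hq π hπ)])]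

lemma P6 (m c : ℕ) (hc : c + 2 < m + 2) :
    Enj (m+1) (c+1) = Enj (m+1) (c+2) + (X - 1) * Enj m (c+1) := by
  have step1 : ∑ π ∈ Finset.univ.filter (fun π : Perm (Fin (m+2)) => vals π 0 = c+2),
      X ^ (excNum π + if vals π (c+1) = c+1 then 1 else 0) = Enj (m+1) (c+1) := by
    rw [Enj]
    refine Finset.sum_bij' (fun π _ => (Equiv.swap ⟨c+1, by omega⟩ ⟨c+2, hc⟩ : Perm (Fin (m+2))) * π)
      (fun π _ => (Equiv.swap ⟨c+1, by omega⟩ ⟨c+2, hc⟩ : Perm (Fin (m+2))) * π) ?_ ?_ ?_ ?_ ?_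
    · intro π hπ
      simp only [Finset.mem_filter, Finset.mem_univ, true_and] at hπ ⊢
      rw [vals_swap_mul _ _ π 0 (by omega), hπ]
      simp
    · intro π hπ
      simp only [Finset.mem_filter, Finset.mem_univ, true_and] at hπ ⊢
      rw [vals_swap_mul _ _ π 0 (by omega), hπ]
      simp
    · intro π _
      rw [← mul_assoc, Equiv.swap_mul_self, one_mul]
    · intro π _
      rw [← mul_assoc, Equiv.swap_mul_self, one_mul]
    · intro π hπ
      simp only [Finset.mem_filter, Finset.mem_univ, true_and] at hπ
      rw [exc_swap hc π hπ]
  rw [← step1]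
  have expand : ∀ π : Perm (Fin (m+2)),
      (X : Polynomial ℚ) ^ (excNum π + if vals π (c+1) = c+1 then 1 else 0)
      = X ^ excNum π + (if vals π (c+1) = c+1 then (X - 1) * X ^ excNum π else 0) := by
    intro π
    split_ifs
    · rw [pow_succ]; ring
    · rw [add_zero, add_zero]
  rw [Finset.sum_congr rfl (fun π _ => expand π), Finset.sum_add_distrib,
    ← Finset.sum_filter, Finset.filter_filter, ← Finset.mul_sum, P6b m c hc]
  rfl

lemma DtotSum (N : ℕ) : ∑ a ∈ Finset.range (N+1), Anj N a = Dtot (N+1) := by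
  calc ∑ a ∈ Finset.range (N+1), Anj N a
      = ∑ π ∈ Finset.univ.filter
          (fun π : Perm (Fin (N+1)) => vals π 0 ∈ Finset.range (N+1)), X ^ desNum π :=
        Finset.sum_fiberwise_eq_sum_filter _ _ _ _
    _ = Dtot (N+1) := by
        rw [Finset.filter_true_of_mem (fun π _ => Finset.mem_range.2 (vals_lt π (by omega)))]
        rfl

lemma EtotSum (N : ℕ) : ∑ a ∈ Finset.range (N+1), Enj N a = Etot (N+1) := by
  calc ∑ a ∈ Finset.range (N+1), Enj N a
      = ∑ π ∈ Finset.univ.filter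
          (fun π : Perm (Fin (N+1)) => vals π 0 ∈ Finset.range (N+1)), X ^ excNum π :=
        Finset.sum_fiberwise_eq_sum_filter _ _ _ _
    _ = Etot (N+1) := by
        rw [Finset.filter_true_of_mem (fun π _ => Finset.mem_range.2 (vals_lt π (by omega)))]
        rfl

lemma main : ∀ m : ℕ, Dtot (m+1) = Etot (m+1) ∧
    ∀ a, 1 ≤ a → a ≤ m → Anj m a = Enj m (m+1-a) := by
  intro m
  induction m with
  | zero =>
    constructor
    · rw [Dtot, Etot]
      refine Finset.sum_congr rfl fun π _ => ?_
      have h1 : desNum π = 0 := by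
        rw [desNum]
        simp
      have h2 : excNum π = 0 := by
        rw [excNum, Finset.card_eq_zero, Finset.filter_eq_empty_iff]
        intro i _
        have hi : π i = i := @Subsingleton.elim _ Fin.subsingleton_one _ _
        rw [hi]
        exact lt_irrefl i
      rw [h1, h2]
    · intro a h1 h2; omega
  | succ m ih =>
    obtain ⟨ihQ, ihP⟩ := ih
    have key : ∀ d, d ≤ m → Anj (m+1) (m+1-d) = Enj (m+1) (d+1) := by
      intro d
      induction d with
      | zero =>
        intro _
        simp only [Nat.sub_zero]
        rw [P3 m, ihQ, ← P4 m]
      | succ d ihd =>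
        intro hd
        have h5 := P5 m (m-d) (by omega)
        have e1 : m - d + 1 = m + 1 - d := by omega
        rw [e1] at h5
        have h6 := ihd (by omega)
        have h7 := ihP (m-d) (by omega) (by omega)
        have e2 : m + 1 - (m - d) = d + 1 := by omega
        rw [e2] at h7
        have h8 := P6 m d (by omega)
        have e3 : m + 1 - (d+1) = m - d := by omega
        rw [e3]
        have := h5.symm.trans h6
        rw [h7] at this
        rw [h8] at this
        exact add_right_cancel this
    have Ppart : ∀ a, 1 ≤ a → a ≤ m+1 → Anj (m+1) a = Enj (m+1) (m+2-a) := by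
      intro a h1 h2
      have h3 := key (m+1-a) (by omega)
      have e1 : m+1-(m+1-a) = a := by omega
      have e2 : m+1-a+1 = m+2-a := by omega
      rw [e1, e2] at h3
      exact h3
    refine ⟨?_, Ppart⟩
    rw [← DtotSum (m+1), ← EtotSum (m+1), Finset.sum_range_succ' _ (m+1),
      Finset.sum_range_succ' _ (m+1), P1 m, P2 (m+1), ihQ]
    congr 1
    rw [← Finset.sum_range_reflect (fun i => Enj (m+1) (i+1)) (m+1)]
    refine Finset.sum_congr rfl fun i hi => ?_
    rw [Finset.mem_range] at hi
    rw [Ppart (i+1) (by omega) (by omega)]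
    congr 1
    omega

end SD2

/-- `A_{n,j}(t) = AExc_{n,n+2-j}(t)` for `2 ≤ j ≤ n`: the descent polynomial over permutations
of `[n]` starting with the letter `j` equals the excedance polynomial over permutations of `[n]`
starting with the letter `n+2-j`. (The first letter of `π` is `π_1`, i.e. `(π 0) + 1` here.) -/
theorem stmt1 (n j : ℕ) (hn : 2 ≤ n) (hj1 : 2 ≤ j) (hj2 : j ≤ n) :
    (∑ π ∈ Finset.univ.filter
        (fun π : Equiv.Perm (Fin n) => ((π ⟨0, by omega⟩ : Fin n) : ℕ) + 1 = j),
        (Polynomial.X : Polynomial ℚ) ^ desNum π) =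
      (∑ π ∈ Finset.univ.filter
        (fun π : Equiv.Perm (Fin n) => ((π ⟨0, by omega⟩ : Fin n) : ℕ) + 1 = n + 2 - j),
        (Polynomial.X : Polynomial ℚ) ^ excNum π) := by
  obtain ⟨m, rfl⟩ : ∃ m, n = m + 1 := ⟨n - 1, by omega⟩
  have H := (SD2.main m).2 (j-1) (by omega) (by omega)
  have e : m + 1 - (j-1) = m + 2 - j := by omega
  rw [e] at H
  have hL : (Finset.univ.filter fun π : Equiv.Perm (Fin (m+1)) =>
      ((π ⟨0, by omega⟩ : Fin (m+1)) : ℕ) + 1 = j) =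
      (Finset.univ.filter fun π : Equiv.Perm (Fin (m+1)) => SD2.vals π 0 = j - 1) := by
    refine Finset.filter_congr fun π _ => ?_
    have h0 : SD2.vals π 0 = ((π ⟨0, by omega⟩ : Fin (m+1)) : ℕ) := by
      rw [SD2.vals, dif_pos (by omega : 0 < m+1)]
    rw [← h0]
    omega
  have hR : (Finset.univ.filter fun π : Equiv.Perm (Fin (m+1)) =>
      ((π ⟨0, by omega⟩ : Fin (m+1)) : ℕ) + 1 = (m+1) + 2 - j) =
      (Finset.univ.filter fun π : Equiv.Perm (Fin (m+1)) => SD2.vals π 0 = m + 2 - j) := by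
    refine Finset.filter_congr fun π _ => ?_
    have h0 : SD2.vals π 0 = ((π ⟨0, by omega⟩ : Fin (m+1)) : ℕ) := by
      rw [SD2.vals, dif_pos (by omega : 0 < m+1)]
    rw [← h0]
    omega
  rw [hL, hR]
  exact H
end

section
/- For every positive integer n, the type B descent polynomial and the type B excedance polynomial over signed permutations with fixed first letter 1 coincide, and likewise with first letter -1: B_{n,1}(t) = BE_{n,1}(t) and B_{n,-1}(t) = BE_{n,-1}(t). -/
open Finset Polynomial

/-- A signed permutation in the hyperoctahedral group `𝔅_n` is modelled by a permutation of
`Fin n` together with a sign vector.  `sval p i` is the value `π_i = π(i)` of the associated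
bijection of `{-n,…,-1,1,…,n}` (with `π(-i) = -π(i)` and the convention `π_0 = 0`). -/
def sval {n : ℕ} (p : Equiv.Perm (Fin n) × (Fin n → Bool)) (i : ℤ) : ℤ :=
  if h : 1 ≤ i ∧ i ≤ (n : ℤ) then
    (if p.2 ⟨(i - 1).toNat, by omega⟩ then -1 else 1) *
      (((p.1 ⟨(i - 1).toNat, by omega⟩ : Fin n) : ℕ) + 1)
  else if h' : 1 ≤ -i ∧ -i ≤ (n : ℤ) then
    -((if p.2 ⟨(-i - 1).toNat, by omega⟩ then -1 else 1) *
      (((p.1 ⟨(-i - 1).toNat, by omega⟩ : Fin n) : ℕ) + 1))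
  else 0

/-- The type B descent number `des_B(π) = |{i ∈ {0,…,n-1} : π_i > π_{i+1}}|` (with `π_0 = 0`). -/
def desB {n : ℕ} (p : Equiv.Perm (Fin n) × (Fin n → Bool)) : ℕ :=
  (Finset.univ.filter (fun i : Fin n =>
    sval p (((i : ℕ) : ℤ) + 1) < sval p ((i : ℕ) : ℤ))).card

/-- The type B excedance number
`exc_B(π) = |{i ∈ [n] : π(|π(i)|) > π(i) or π(i) = -i}|`. -/
def excB {n : ℕ} (p : Equiv.Perm (Fin n) × (Fin n → Bool)) : ℕ :=
  (Finset.univ.filter (fun i : Fin n =>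
    sval p (((i : ℕ) : ℤ) + 1) < sval p |sval p (((i : ℕ) : ℤ) + 1)| ∨
      sval p (((i : ℕ) : ℤ) + 1) = -(((i : ℕ) : ℤ) + 1))).card

/-- The restricted type B Eulerian polynomial `B_{n,k}(t) = ∑_{π ∈ 𝔅_n, π_1 = k} t^{des_B(π)}`. -/
noncomputable def Bpoly (n : ℕ) (k : ℤ) : Polynomial ℚ :=
  ∑ p ∈ Finset.univ.filter
      (fun p : Equiv.Perm (Fin n) × (Fin n → Bool) => sval p 1 = k),
    Polynomial.X ^ desB p

/-- `BE_{n,k}(t) = ∑_{π ∈ 𝔅_n, π_1 = k} t^{exc_B(π)}`. -/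
noncomputable def BEpoly (n : ℕ) (k : ℤ) : Polynomial ℚ :=
  ∑ p ∈ Finset.univ.filter
      (fun p : Equiv.Perm (Fin n) × (Fin n → Bool) => sval p 1 = k),
    Polynomial.X ^ excB p


namespace Stmt5Aux

variable {n : ℕ}

/-- position `i` is a left-to-right maximum of the permutation word. -/
def isMax (e : Equiv.Perm (Fin n)) (i : Fin n) : Prop := ∀ j, j < i → e j < e i

instance (e : Equiv.Perm (Fin n)) : DecidablePred (isMax e) := fun _ => by
  unfold isMax; infer_instance

lemma isMax_zero (e : Equiv.Perm (Fin n)) (i : Fin n) (h : i.val = 0) : isMax e i := by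
  intro j hj; exact absurd hj (by simp [Fin.lt_def, h])

/-- positions `j ≥ i` such that no left-to-right maximum lies in `(i, j]`. -/
def endSet (e : Equiv.Perm (Fin n)) (i : Fin n) : Finset (Fin n) :=
  univ.filter (fun j => i ≤ j ∧ ∀ k, i < k → k ≤ j → ¬ isMax e k)

lemma self_mem_endSet (e : Equiv.Perm (Fin n)) (i : Fin n) : i ∈ endSet e i := by
  simp only [endSet, mem_filter, mem_univ, true_and]
  exact ⟨le_refl i, fun k h1 h2 => absurd (lt_of_lt_of_le h1 h2) (lt_irrefl i)⟩

/-- the end of the block starting at a left-to-right maximum `i`. -/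
def bEnd (e : Equiv.Perm (Fin n)) (i : Fin n) : Fin n :=
  (endSet e i).max' ⟨i, self_mem_endSet e i⟩

lemma bEnd_mem (e : Equiv.Perm (Fin n)) (i : Fin n) : bEnd e i ∈ endSet e i :=
  Finset.max'_mem _ _

lemma le_bEnd (e : Equiv.Perm (Fin n)) (i : Fin n) : i ≤ bEnd e i := by
  have := bEnd_mem e i
  simp only [endSet, mem_filter] at this
  exact this.2.1

lemma bEnd_noMax (e : Equiv.Perm (Fin n)) (i : Fin n) :
    ∀ k, i < k → k ≤ bEnd e i → ¬ isMax e k := by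
  have := bEnd_mem e i
  simp only [endSet, mem_filter] at this
  exact this.2.2

lemma bEnd_succ_isMax (e : Equiv.Perm (Fin n)) (i : Fin n)
    (h : (bEnd e i).val + 1 < n) : isMax e ⟨(bEnd e i).val + 1, h⟩ := by
  by_contra hmax
  have hmem : (⟨(bEnd e i).val + 1, h⟩ : Fin n) ∈ endSet e i := by
    simp only [endSet, mem_filter, mem_univ, true_and]
    refine ⟨le_trans (le_bEnd e i) (by simp only [Fin.le_def, Fin.val_mk]; omega), ?_⟩
    intro k h1 h2
    rcases lt_or_eq_of_le h2 with h3 | h3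
    · refine bEnd_noMax e i k h1 ?_
      rw [Fin.lt_def] at h3; rw [Fin.le_def]; simp at h3; omega
    · rw [h3]; exact hmax
  have h2 : (⟨(bEnd e i).val + 1, h⟩ : Fin n) ≤ bEnd e i := Finset.le_max' (endSet e i) _ hmem
  rw [Fin.le_def] at h2; simp at h2

/-- left-to-right maxima positions `≤ i`. -/
def startSet (e : Equiv.Perm (Fin n)) (i : Fin n) : Finset (Fin n) :=
  univ.filter (fun m => m ≤ i ∧ isMax e m)

lemma zero_mem_startSet (e : Equiv.Perm (Fin n)) (i : Fin n) :
    (⟨0, Nat.lt_of_le_of_lt (Nat.zero_le _) i.isLt⟩ : Fin n) ∈ startSet e i := by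
  simp only [startSet, mem_filter, mem_univ, true_and]
  exact ⟨by rw [Fin.le_def]; exact Nat.zero_le _, isMax_zero e _ rfl⟩

/-- the start of the block containing position `i`. -/
def bStart (e : Equiv.Perm (Fin n)) (i : Fin n) : Fin n :=
  (startSet e i).max' ⟨_, zero_mem_startSet e i⟩

lemma bStart_le (e : Equiv.Perm (Fin n)) (i : Fin n) : bStart e i ≤ i := by
  have := Finset.max'_mem (startSet e i) ⟨_, zero_mem_startSet e i⟩
  simp only [startSet, mem_filter] at this
  exact this.2.1

lemma isMax_bStart (e : Equiv.Perm (Fin n)) (i : Fin n) : isMax e (bStart e i) := by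
  have := Finset.max'_mem (startSet e i) ⟨_, zero_mem_startSet e i⟩
  simp only [startSet, mem_filter] at this
  exact this.2.2

lemma le_bStart (e : Equiv.Perm (Fin n)) (i : Fin n) (m : Fin n) (h1 : m ≤ i)
    (h2 : isMax e m) : m ≤ bStart e i := by
  apply Finset.le_max'
  simp only [startSet, mem_filter, mem_univ, true_and]
  exact ⟨h1, h2⟩

lemma bStart_gap (e : Equiv.Perm (Fin n)) (i : Fin n) (k : Fin n)
    (h1 : bStart e i < k) (h2 : k ≤ i) : ¬ isMax e k := by
  intro hmax
  exact absurd (le_bStart e i k h2 hmax) (not_le_of_gt h1)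

lemma bStart_of_isMax (e : Equiv.Perm (Fin n)) (i : Fin n) (h : isMax e i) :
    bStart e i = i :=
  le_antisymm (bStart_le e i) (le_bStart e i i (le_refl i) h)

lemma bStart_bEnd (e : Equiv.Perm (Fin n)) (i : Fin n) (h : isMax e i) :
    bStart e (bEnd e i) = i := by
  have h1 : i ≤ bStart e (bEnd e i) := le_bStart e _ i (le_bEnd e i) h
  rcases lt_or_eq_of_le h1 with h2 | h2
  · exact absurd (isMax_bStart e (bEnd e i))
      (bEnd_noMax e i _ h2 (bStart_le e (bEnd e i)))
  · exact h2.symm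

lemma bEnd_bStart (e : Equiv.Perm (Fin n)) (j : Fin n)
    (hj : j.val + 1 = n ∨ ∃ h : j.val + 1 < n, isMax e ⟨j.val + 1, h⟩) :
    bEnd e (bStart e j) = j := by
  have hmem : j ∈ endSet e (bStart e j) := by
    simp only [endSet, mem_filter, mem_univ, true_and]
    exact ⟨bStart_le e j, fun k h1 h2 => bStart_gap e j k h1 h2⟩
  have h1 : j ≤ bEnd e (bStart e j) := Finset.le_max' _ _ hmem
  rcases lt_or_eq_of_le h1 with h2 | h2
  · exfalso
    rw [Fin.lt_def] at h2
    have hlt : j.val + 1 < n := by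
      have := (bEnd e (bStart e j)).isLt
      omega
    rcases hj with hj | ⟨h', hj⟩
    · omega
    · exact bEnd_noMax e (bStart e j) ⟨j.val + 1, hlt⟩
        (lt_of_le_of_lt (bStart_le e j) (by simp only [Fin.lt_def, Fin.val_mk]; omega))
        (by simp only [Fin.le_def, Fin.val_mk]; omega) hj
  · exact h2.symm


/-- "previous position within the block, cyclically": block starts map to block ends,
other positions map to their predecessor. -/
def gfun (e : Equiv.Perm (Fin n)) (i : Fin n) : Fin n :=
  if isMax e i then bEnd e i
  else ⟨i.val - 1, Nat.lt_of_le_of_lt (Nat.sub_le _ _) i.isLt⟩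

lemma gfun_inj (e : Equiv.Perm (Fin n)) : Function.Injective (gfun e) := by
  intro a b hab
  by_cases ha : isMax e a <;> by_cases hb : isMax e b
  · rw [gfun, if_pos ha, gfun, if_pos hb] at hab
    rw [← bStart_bEnd e a ha, hab, bStart_bEnd e b hb]
  · rw [gfun, if_pos ha, gfun, if_neg hb] at hab
    exfalso
    have hb0 : b.val ≠ 0 := fun h => hb (isMax_zero e b h)
    have h1 : (bEnd e a).val + 1 = b.val := by
      have := congrArg Fin.val hab; simp at this; omega
    have h2 : (bEnd e a).val + 1 < n := by rw [h1]; exact b.isLt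
    have := bEnd_succ_isMax e a h2
    apply hb
    have hbeq : (⟨(bEnd e a).val + 1, h2⟩ : Fin n) = b := by
      apply Fin.ext; simp [h1]
    rwa [hbeq] at this
  · rw [gfun, if_neg ha, gfun, if_pos hb] at hab
    exfalso
    have ha0 : a.val ≠ 0 := fun h => ha (isMax_zero e a h)
    have h1 : (bEnd e b).val + 1 = a.val := by
      have := congrArg Fin.val hab; simp at this; omega
    have h2 : (bEnd e b).val + 1 < n := by rw [h1]; exact a.isLt
    have := bEnd_succ_isMax e b h2
    apply ha
    have haeq : (⟨(bEnd e b).val + 1, h2⟩ : Fin n) = a := by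
      apply Fin.ext; simp [h1]
    rwa [haeq] at this
  · rw [gfun, if_neg ha, gfun, if_neg hb] at hab
    have ha0 : a.val ≠ 0 := fun h => ha (isMax_zero e a h)
    have hb0 : b.val ≠ 0 := fun h => hb (isMax_zero e b h)
    have := congrArg Fin.val hab; simp at this
    apply Fin.ext; omega

/-- `gfun` as a permutation. -/
noncomputable def gEquiv (e : Equiv.Perm (Fin n)) : Equiv.Perm (Fin n) :=
  Equiv.ofBijective (gfun e) (Finite.injective_iff_bijective.mp (gfun_inj e))

lemma gEquiv_apply (e : Equiv.Perm (Fin n)) (i : Fin n) : gEquiv e i = gfun e i := rfl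

lemma gfun_fix (e : Equiv.Perm (Fin n)) (a : Fin n) (h : gfun e a = a) :
    isMax e a ∧ bEnd e a = a := by
  by_cases ha : isMax e a
  · rw [gfun, if_pos ha] at h; exact ⟨ha, h⟩
  · exfalso
    rw [gfun, if_neg ha] at h
    have ha0 : a.val ≠ 0 := fun h' => ha (isMax_zero e a h')
    have := congrArg Fin.val h; simp at this; omega

/-- every value in a block is at most the value at the block start. -/
lemma val_le_bStart (e : Equiv.Perm (Fin n)) (j : Fin n) :
    ∀ c : ℕ, ∀ k : Fin n, k.val = c → k ≤ j → e k ≤ e (bStart e j) := by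
  intro c
  induction c using Nat.strong_induction_on with
  | _ c IH =>
    intro k hk hkj
    by_cases h : k ≤ bStart e j
    · rcases lt_or_eq_of_le h with h1 | h1
      · exact le_of_lt (isMax_bStart e j k h1)
      · rw [h1]
    · push_neg at h
      have hnm : ¬ isMax e k := bStart_gap e j k h hkj
      rw [isMax] at hnm; push_neg at hnm
      obtain ⟨k', hk'lt, hk'ge⟩ := hnm
      exact le_trans hk'ge (IH k'.val (by rw [← hk]; exact hk'lt) k' rfl
        (le_trans (le_of_lt hk'lt) hkj))

lemma val_lt_bStart (e : Equiv.Perm (Fin n)) (j k : Fin n) (h1 : k ≤ j)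
    (h2 : k ≠ bStart e j) : e k < e (bStart e j) :=
  lt_of_le_of_ne (val_le_bStart e j k.val k rfl h1)
    (fun hh => h2 (e.injective hh))


/-- the signed value of the word at (0-based) position `i`. -/
def wv (p : Equiv.Perm (Fin n) × (Fin n → Bool)) (i : Fin n) : ℤ :=
  (if p.2 i then -1 else 1) * (((p.1 i : Fin n) : ℕ) + 1)

lemma sval_pos (p : Equiv.Perm (Fin n) × (Fin n → Bool)) (i : Fin n) :
    sval p (((i : ℕ) : ℤ) + 1) = wv p i := by
  have h : (1 : ℤ) ≤ ((i : ℕ) : ℤ) + 1 ∧ ((i : ℕ) : ℤ) + 1 ≤ (n : ℤ) := by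
    constructor
    · omega
    · have := i.isLt; omega
  rw [sval, dif_pos h]
  have hidx : (⟨((((i : ℕ) : ℤ) + 1) - 1).toNat, by omega⟩ : Fin n) = i := by
    apply Fin.ext; simp
  rw [hidx, wv]

lemma sval_zero' (p : Equiv.Perm (Fin n) × (Fin n → Bool)) : sval p 0 = 0 := by
  rw [sval, dif_neg (by omega), dif_neg (by omega)]

/-- the previous word value (`0` at position `0`). -/
def wprev (p : Equiv.Perm (Fin n) × (Fin n → Bool)) (i : Fin n) : ℤ :=
  if i.val = 0 then 0
  else wv p ⟨i.val - 1, Nat.lt_of_le_of_lt (Nat.sub_le _ _) i.isLt⟩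

lemma sval_cast (p : Equiv.Perm (Fin n) × (Fin n → Bool)) (i : Fin n) :
    sval p ((i : ℕ) : ℤ) = wprev p i := by
  rw [wprev]
  by_cases h : i.val = 0
  · rw [if_pos h, h]; exact_mod_cast sval_zero' p
  · rw [if_neg h]
    have : ((i : ℕ) : ℤ) = (((⟨i.val - 1, Nat.lt_of_le_of_lt (Nat.sub_le _ _) i.isLt⟩ :
        Fin n) : ℕ) : ℤ) + 1 := by simp; omega
    rw [this, sval_pos]

lemma wv_abs (p : Equiv.Perm (Fin n) × (Fin n → Bool)) (i : Fin n) :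
    |wv p i| = ((p.1 i : ℕ) : ℤ) + 1 := by
  rcases hb : p.2 i with _ | _ <;> simp [wv, hb]
  · positivity
  · have h0 : (0:ℤ) ≤ (((p.1 i : Fin n) : ℕ) : ℤ) := Int.natCast_nonneg _
    rw [abs_of_nonpos (by linarith)]; ring

lemma sval_abs_wv (p : Equiv.Perm (Fin n) × (Fin n → Bool)) (i : Fin n) :
    sval p |wv p i| = wv p (p.1 i) := by
  rw [wv_abs]
  exact sval_pos p (p.1 i)

lemma wv_neg_iff (p : Equiv.Perm (Fin n) × (Fin n → Bool)) (i : Fin n) :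
    wv p i < 0 ↔ p.2 i = true := by
  rw [wv]
  rcases p.2 i with _ | _ <;> simp <;> omega

/-- the Foata-style bijection: conjugate by the word to the
"previous within block" permutation, transporting signs along. -/
noncomputable def phi (p : Equiv.Perm (Fin n) × (Fin n → Bool)) :
    Equiv.Perm (Fin n) × (Fin n → Bool) :=
  (p.1.symm.trans ((gEquiv p.1).trans p.1), fun j => p.2 (gfun p.1 (p.1.symm j)))

lemma phi_fst (p : Equiv.Perm (Fin n) × (Fin n → Bool)) (j : Fin n) :
    (phi p).1 j = p.1 (gfun p.1 (p.1.symm j)) := rfl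

lemma phi_snd (p : Equiv.Perm (Fin n) × (Fin n → Bool)) (j : Fin n) :
    (phi p).2 j = p.2 (gfun p.1 (p.1.symm j)) := rfl

lemma wv_phi (p : Equiv.Perm (Fin n) × (Fin n → Bool)) (j : Fin n) :
    wv (phi p) j = wv p (gfun p.1 (p.1.symm j)) := by
  rw [wv, wv, phi_fst, phi_snd]


lemma desB_eq (p : Equiv.Perm (Fin n) × (Fin n → Bool)) :
    desB p = (univ.filter (fun b : Fin n => wv p b < wprev p b)).card := by
  rw [desB]
  congr 1
  apply Finset.filter_congr
  intro i _
  rw [sval_pos, sval_cast]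

/-- the per-position excedance condition transported to word positions. -/
def econd (p : Equiv.Perm (Fin n) × (Fin n → Bool)) (b : Fin n) : Prop :=
  wv p b < wv p (gfun p.1 b) ∨ (gfun p.1 b = b ∧ p.2 b = true)

instance (p : Equiv.Perm (Fin n) × (Fin n → Bool)) : DecidablePred (econd p) :=
  fun _ => by unfold econd; infer_instance

lemma int_cmp {x y : ℤ} (h : |x| < |y|) : y < x ↔ y < 0 := by
  rcases abs_cases x with ⟨h1, h2⟩ | ⟨h1, h2⟩ <;>
    rcases abs_cases y with ⟨h3, h4⟩ | ⟨h3, h4⟩ <;> omega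

lemma wv_abs_lt (p : Equiv.Perm (Fin n) × (Fin n → Bool)) {x y : Fin n}
    (h : p.1 x < p.1 y) : |wv p x| < |wv p y| := by
  rw [wv_abs, wv_abs]
  rw [Fin.lt_def] at h
  omega

/-- for a left-to-right maximum `b`, descending at `b` means the value is negative. -/
lemma desc_iff_neg (p : Equiv.Perm (Fin n) × (Fin n → Bool)) (b : Fin n)
    (h : isMax p.1 b) : wv p b < wprev p b ↔ wv p b < 0 := by
  rw [wprev]
  by_cases h0 : b.val = 0
  · rw [if_pos h0]
  · rw [if_neg h0]
    set b' : Fin n := ⟨b.val - 1, Nat.lt_of_le_of_lt (Nat.sub_le _ _) b.isLt⟩ with hb'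
    have hlt : b' < b := by rw [Fin.lt_def]; simp [hb']; omega
    exact int_cmp (wv_abs_lt p (h b' hlt))

lemma econd_iff (p : Equiv.Perm (Fin n) × (Fin n → Bool)) (b : Fin n) :
    econd p b ↔ wv p b < wprev p b := by
  rw [econd]
  by_cases h : isMax p.1 b
  · rw [desc_iff_neg p b h]
    have hg : gfun p.1 b = bEnd p.1 b := by rw [gfun, if_pos h]
    by_cases hE : bEnd p.1 b = b
    · rw [hg, hE]
      simp only [lt_irrefl, false_or, true_and]
      exact (wv_neg_iff p b).symm
    · have hbc : b < bEnd p.1 b := lt_of_le_of_ne (le_bEnd p.1 b) (Ne.symm hE)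
      have hne : gfun p.1 b ≠ b := by rw [hg]; exact hE
      have hval : p.1 (bEnd p.1 b) < p.1 b := by
        have h1 : bStart p.1 (bEnd p.1 b) = b := bStart_bEnd p.1 b h
        have := val_lt_bStart p.1 (bEnd p.1 b) (bEnd p.1 b) (le_refl _)
          (by rw [h1]; exact hE)
        rwa [h1] at this
      rw [hg]
      constructor
      · rintro (h1 | ⟨h1, _⟩)
        · exact (int_cmp (wv_abs_lt p hval)).mp h1
        · exact absurd h1 hE
      · intro h1
        exact Or.inl ((int_cmp (wv_abs_lt p hval)).mpr h1)
  · have h0 : b.val ≠ 0 := fun hh => h (isMax_zero p.1 b hh)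
    have hg : gfun p.1 b = ⟨b.val - 1, Nat.lt_of_le_of_lt (Nat.sub_le _ _) b.isLt⟩ := by
      rw [gfun, if_neg h]
    have hne : gfun p.1 b ≠ b := by
      rw [hg]; intro hh
      have := congrArg Fin.val hh; simp at this; omega
    rw [wprev, if_neg h0]
    constructor
    · rintro (h1 | ⟨h1, _⟩)
      · rwa [hg] at h1
      · exact absurd h1 hne
    · intro h1
      exact Or.inl (by rwa [hg])

lemma card_filter_perm {α : Type*} [Fintype α] [DecidableEq α] (σ : Equiv.Perm α)
    (P : α → Prop) [DecidablePred P] :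
    (univ.filter (fun a => P (σ a))).card = (univ.filter P).card := by
  apply Finset.card_bij' (fun a _ => σ a) (fun b _ => σ.symm b) <;> simp

lemma excB_phi (p : Equiv.Perm (Fin n) × (Fin n → Bool)) : excB (phi p) = desB p := by
  rw [excB, desB_eq]
  have key : ∀ i : Fin n,
      (sval (phi p) (((i : ℕ) : ℤ) + 1) < sval (phi p) |sval (phi p) (((i : ℕ) : ℤ) + 1)| ∨
        sval (phi p) (((i : ℕ) : ℤ) + 1) = -(((i : ℕ) : ℤ) + 1)) ↔
      econd p (gfun p.1 (p.1.symm i)) := by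
    intro i
    set a := p.1.symm i with ha
    have hia : i = p.1 a := by rw [ha]; simp
    have h1 : sval (phi p) (((i : ℕ) : ℤ) + 1) = wv p (gfun p.1 a) := by
      rw [sval_pos, wv_phi, ha]
    have h2 : sval (phi p) |wv p (gfun p.1 a)| = wv p (gfun p.1 (gfun p.1 a)) := by
      have hw : wv p (gfun p.1 a) = wv (phi p) i := by rw [wv_phi, ha]
      rw [hw, sval_abs_wv, wv_phi]
      congr 1
      rw [phi_fst, ← ha]
      simp
    rw [h1, h2, econd]
    constructor
    · rintro (hc | hc)
      · exact Or.inl hc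
      · right
        -- hc : wv p (gfun p.1 a) = -(((i:ℕ):ℤ)+1)
        rw [hia] at hc
        have habs : |wv p (gfun p.1 a)| = ((p.1 a : ℕ) : ℤ) + 1 := by
          rw [hc, abs_of_nonpos (by omega)]; ring
        rw [wv_abs] at habs
        have hpa : p.1 (gfun p.1 a) = p.1 a := by
          apply Fin.ext
          have : ((p.1 (gfun p.1 a) : ℕ) : ℤ) = ((p.1 a : ℕ) : ℤ) := by omega
          exact_mod_cast this
        have hga : gfun p.1 a = a := p.1.injective hpa
        have hsign : p.2 (gfun p.1 a) = true := by
          rw [← wv_neg_iff, hc]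
          have : (0:ℤ) ≤ ((p.1 a : ℕ) : ℤ) := Int.natCast_nonneg _
          omega
        rw [hga] at hsign ⊢
        exact ⟨by rw [hga], hsign⟩
    · rintro (hc | ⟨hc, hs⟩)
      · exact Or.inl hc
      · right
        have hga : gfun p.1 a = a := gfun_inj p.1 hc
        rw [hga] at hs ⊢
        rw [wv, hs, hia]
        simp
  -- reindex
  have step1 : (univ.filter (fun i : Fin n =>
      sval (phi p) (((i : ℕ) : ℤ) + 1) < sval (phi p) |sval (phi p) (((i : ℕ) : ℤ) + 1)| ∨
        sval (phi p) (((i : ℕ) : ℤ) + 1) = -(((i : ℕ) : ℤ) + 1))).card =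
      (univ.filter (fun i : Fin n => econd p (gfun p.1 (p.1.symm i)))).card := by
    congr 1
    apply Finset.filter_congr
    intro i _
    exact key i
  rw [step1]
  have step2 := card_filter_perm (σ := p.1.symm.trans (gEquiv p.1)) (econd p)
  have step3 : (univ.filter (fun i : Fin n => econd p (gfun p.1 (p.1.symm i)))).card =
      (univ.filter (econd p)).card := step2
  rw [step3]
  congr 1
  apply Finset.filter_congr
  intro b _
  exact econd_iff p b


lemma sval_one (hn : 0 < n) (p : Equiv.Perm (Fin n) × (Fin n → Bool)) :
    sval p 1 = wv p ⟨0, hn⟩ := by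
  have h : ((((⟨0, hn⟩ : Fin n) : ℕ) : ℤ) + 1) = 1 := by simp
  rw [← h, sval_pos]

lemma first_zero (hn : 0 < n) (p : Equiv.Perm (Fin n) × (Fin n → Bool))
    (h : sval p 1 = 1 ∨ sval p 1 = -1) : p.1 ⟨0, hn⟩ = ⟨0, hn⟩ := by
  rw [sval_one hn] at h
  have habs : |wv p ⟨0, hn⟩| = 1 := by rcases h with h | h <;> rw [h] <;> simp
  rw [wv_abs] at habs
  apply Fin.ext
  simp only [Fin.val_mk]
  omega

lemma bEnd_zero (hn : 0 < n) (e : Equiv.Perm (Fin n)) (h : e ⟨0, hn⟩ = ⟨0, hn⟩) :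
    bEnd e ⟨0, hn⟩ = ⟨0, hn⟩ := by
  by_contra hc
  have h1 : 0 < (bEnd e ⟨0, hn⟩).val := by
    rcases Nat.eq_zero_or_pos (bEnd e ⟨0, hn⟩).val with h2 | h2
    · exact absurd (Fin.ext h2 : bEnd e ⟨0, hn⟩ = ⟨0, hn⟩) hc
    · exact h2
  have h2 : 1 < n := lt_of_le_of_lt h1 (bEnd e ⟨0, hn⟩).isLt
  have hk : isMax e ⟨1, h2⟩ := by
    intro j hj
    have hj0 : j = ⟨0, hn⟩ := by apply Fin.ext; rw [Fin.lt_def] at hj; simp at hj ⊢; omega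
    rw [hj0, h, Fin.lt_def]
    simp only [Fin.val_mk]
    rcases Nat.eq_zero_or_pos (e ⟨1, h2⟩).val with h3 | h3
    · exact absurd (e.injective (h.trans (Fin.ext h3.symm : (⟨0,hn⟩ : Fin n) = e ⟨1, h2⟩)))
        (by intro hh; have := congrArg Fin.val hh; simp at this)
    · exact h3
  exact bEnd_noMax e ⟨0, hn⟩ ⟨1, h2⟩ (by rw [Fin.lt_def]; simp)
    (by rw [Fin.le_def]; simp; omega) hk

lemma sval_phi_one (hn : 0 < n) (p : Equiv.Perm (Fin n) × (Fin n → Bool))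
    (h : sval p 1 = 1 ∨ sval p 1 = -1) : sval (phi p) 1 = sval p 1 := by
  have h0 := first_zero hn p h
  rw [sval_one hn, sval_one hn, wv_phi]
  have hsymm : p.1.symm ⟨0, hn⟩ = ⟨0, hn⟩ := by
    rw [Equiv.symm_apply_eq]; exact h0.symm
  rw [hsymm, gfun, if_pos (isMax_zero p.1 _ rfl), bEnd_zero hn p.1 h0]


lemma blockEndCase (p p' : Equiv.Perm (Fin n) × (Fin n → Bool)) (h : phi p = phi p')
    (j : Fin n) (SA : ∀ k : Fin n, j < k → p.1 k = p'.1 k)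
    (maxT : ∀ j1 : Fin n, j < j1 → (isMax p.1 j1 ↔ isMax p'.1 j1))
    (hbe : j.val + 1 = n ∨ ∃ hlt : j.val + 1 < n, isMax p.1 ⟨j.val + 1, hlt⟩) :
    p.1 j = p'.1 j := by
  have hbe' : j.val + 1 = n ∨ ∃ hlt : j.val + 1 < n, isMax p'.1 ⟨j.val + 1, hlt⟩ := by
    rcases hbe with h1 | ⟨hlt, hm⟩
    · exact Or.inl h1
    · exact Or.inr ⟨hlt, (maxT ⟨j.val + 1, hlt⟩ (by rw [Fin.lt_def]; simp)).mp hm⟩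
  have hq : (phi p).1 (p.1 (bStart p.1 j)) = p.1 j := by
    rw [phi_fst, Equiv.symm_apply_apply, gfun, if_pos (isMax_bStart p.1 j),
      bEnd_bStart p.1 j hbe]
  have hq' : (phi p').1 (p'.1 (bStart p'.1 j)) = p'.1 j := by
    rw [phi_fst, Equiv.symm_apply_apply, gfun, if_pos (isMax_bStart p'.1 j),
      bEnd_bStart p'.1 j hbe']
  have himgT : (univ.filter (fun k => j < k)).image p.1 =
      (univ.filter (fun k => j < k)).image p'.1 := by
    apply Finset.image_congr
    intro k hk
    simp only [coe_filter, Set.mem_setOf_eq, mem_univ, true_and] at hk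
    exact SA k hk
  have hmem : ∀ (e : Equiv.Perm (Fin n)),
      e (bStart e j) ∉ (univ.filter (fun k => j < k)).image e := by
    intro e hmemc
    obtain ⟨k, hk, hkk⟩ := Finset.mem_image.mp hmemc
    simp only [mem_filter, mem_univ, true_and] at hk
    have heq : bStart e j = k := e.injective hkk.symm
    rw [← heq] at hk
    exact absurd (bStart_le e j) (not_le_of_gt hk)
  have hub : ∀ (e : Equiv.Perm (Fin n)) (v : Fin n),
      v ∉ (univ.filter (fun k => j < k)).image e → v ≤ e (bStart e j) := by
    intro e v hv
    have hk : e (e.symm v) = v := by simp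
    have hkle : e.symm v ≤ j := by
      by_contra hgt
      push_neg at hgt
      exact hv (Finset.mem_image.mpr ⟨e.symm v, by simp [hgt], hk⟩)
    rw [← hk]
    exact val_le_bStart e j (e.symm v).val (e.symm v) rfl hkle
  have hMeq : p.1 (bStart p.1 j) = p'.1 (bStart p'.1 j) := by
    apply le_antisymm
    · exact hub p'.1 _ (by rw [← himgT]; exact hmem p.1)
    · exact hub p.1 _ (by rw [himgT]; exact hmem p'.1)
  rw [← hq, ← hq', h, hMeq]

lemma phi_injective : Function.Injective (phi (n := n)) := by
  intro p p' h
  have hfst : ∀ j, (phi p).1 j = (phi p').1 j := fun j => by rw [h]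
  have key : ∀ t : ℕ, ∀ j : Fin n, n - t ≤ j.val → p.1 j = p'.1 j := by
    intro t
    induction t with
    | zero => intro j hj; exact absurd j.isLt (by omega)
    | succ t IH =>
      intro j hj
      by_cases hc : n - t ≤ j.val
      · exact IH j hc
      push_neg at hc
      have SA : ∀ k : Fin n, j < k → p.1 k = p'.1 k := by
        intro k hk; apply IH; rw [Fin.lt_def] at hk; omega
      have maxT : ∀ j1 : Fin n, j < j1 → (isMax p.1 j1 ↔ isMax p'.1 j1) := by
        intro j1 hj1
        have himg : (univ.filter (fun k => j1 ≤ k)).image p.1 =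
            (univ.filter (fun k => j1 ≤ k)).image p'.1 := by
          apply Finset.image_congr
          intro k hk
          simp only [coe_filter, Set.mem_setOf_eq, mem_univ, true_and] at hk
          exact SA k (lt_of_lt_of_le hj1 hk)
        have hchar : ∀ e : Equiv.Perm (Fin n), isMax e j1 ↔
            (∀ v : Fin n, v ∉ (univ.filter (fun k => j1 ≤ k)).image e → v < e j1) := by
          intro e
          constructor
          · intro hm v hv
            have hk : e (e.symm v) = v := by simp
            have : ¬ j1 ≤ e.symm v := by
              intro hle
              exact hv (Finset.mem_image.mpr ⟨e.symm v, by simp [hle], hk⟩)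
            push_neg at this
            rw [← hk]
            exact hm _ this
          · intro hall k hk
            apply hall
            intro hmem
            obtain ⟨k', hk', hkk⟩ := Finset.mem_image.mp hmem
            simp only [mem_filter, mem_univ, true_and] at hk'
            exact absurd (e.injective hkk ▸ hk' : j1 ≤ k) (not_le_of_gt hk)
        rw [hchar p.1, hchar p'.1, himg, SA j1 hj1]
      -- goal: p.1 j = p'.1 j
      by_cases hlast : j.val + 1 = n
      case neg =>
        have hj1n : j.val + 1 < n := by have := j.isLt; omega
        set j1 : Fin n := ⟨j.val + 1, hj1n⟩ with hj1def
        have hjj1 : j < j1 := by rw [Fin.lt_def]; simp [hj1def]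
        by_cases hm : isMax p.1 j1
        case neg =>
          -- case B
          have hm' : ¬ isMax p'.1 j1 := fun x => hm ((maxT j1 hjj1).mpr x)
          have hg : gfun p.1 j1 = j := by
            rw [gfun, if_neg hm]; apply Fin.ext; simp [hj1def]
          have hg' : gfun p'.1 j1 = j := by
            rw [gfun, if_neg hm']; apply Fin.ext; simp [hj1def]
          have e1 : (phi p).1 (p.1 j1) = p.1 j := by
            rw [phi_fst]; simp only [Equiv.symm_apply_apply]; rw [hg]
          have e2 : (phi p').1 (p'.1 j1) = p'.1 j := by
            rw [phi_fst]; simp only [Equiv.symm_apply_apply]; rw [hg']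
          rw [← e1, ← e2, SA j1 hjj1, hfst]
        case pos =>
          -- case A with inner max
          exact blockEndCase p p' h j SA maxT (Or.inr ⟨hj1n, hm⟩)
      case pos =>
        exact blockEndCase p p' h j SA maxT (Or.inl hlast)
  have hperm : p.1 = p'.1 := by
    apply Equiv.ext
    intro j
    exact key n j (by omega)
  have hsnd : p.2 = p'.2 := by
    funext b
    have hs : ∀ j, (phi p).2 j = (phi p').2 j := fun j => by rw [h]
    have := hs (p.1 ((gEquiv p.1).symm b))
    rw [phi_snd, phi_snd, Equiv.symm_apply_apply, ← hperm, Equiv.symm_apply_apply] at this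
    have hb : gfun p.1 ((gEquiv p.1).symm b) = b := by
      have : gEquiv p.1 ((gEquiv p.1).symm b) = b := Equiv.apply_symm_apply _ _
      rwa [gEquiv_apply] at this
    rwa [hb] at this
  exact Prod.ext hperm hsnd

end Stmt5Aux

open Stmt5Aux in
/-- `B_{n,1}(t) = BE_{n,1}(t)` and `B_{n,-1}(t) = BE_{n,-1}(t)`: over signed permutations
with first letter `1` (resp. `-1`) the type B descent and excedance polynomials coincide. -/
theorem stmt5 (n : ℕ) (hn : 1 ≤ n) :
    Bpoly n 1 = BEpoly n 1 ∧ Bpoly n (-1) = BEpoly n (-1) := by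
  have main : ∀ k : ℤ, k = 1 ∨ k = -1 → Bpoly n k = BEpoly n k := by
    intro k hk
    rw [Bpoly, BEpoly]
    have hmapsto : ∀ p ∈ (Finset.univ.filter
        (fun p : Equiv.Perm (Fin n) × (Fin n → Bool) => sval p 1 = k)),
        phi p ∈ (Finset.univ.filter
        (fun p : Equiv.Perm (Fin n) × (Fin n → Bool) => sval p 1 = k)) := by
      intro p hp
      simp only [Finset.mem_filter, Finset.mem_univ, true_and] at hp ⊢
      have hcase : sval p 1 = 1 ∨ sval p 1 = -1 := by
        rcases hk with h | h
        · exact Or.inl (by rw [hp, h])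
        · exact Or.inr (by rw [hp, h])
      rw [sval_phi_one hn p hcase]
      exact hp
    apply Finset.sum_bij (i := fun p _ => phi p) hmapsto
      (fun a₁ ha₁ a₂ ha₂ hab => phi_injective hab)
    · intro b hb
      obtain ⟨a, ha, hab⟩ := Finset.surj_on_of_inj_on_of_card_le
        (fun p _ => phi p) hmapsto (fun a₁ a₂ ha₁ ha₂ hab => phi_injective hab)
        (le_refl _) b hb
      exact ⟨a, ha, hab.symm⟩
    · intro p hp
      rw [excB_phi]
  exact ⟨main 1 (Or.inl rfl), main (-1) (Or.inr rfl)⟩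
end

section
/- For positive integers n and i with i ∈ {-1, -2, …, -n}, the following identity of formal power series in ℚ[[t]] holds: B_{n,i}(t) = (1-t)^n · Σ_{k≥1} (2k-1)^{n-|i|} (2k)^{|i|-1} t^k. -/
open Finset Polynomial

abbrev HO (n : ℕ) := Equiv.Perm (Fin n) × (Fin n → Bool)

def wv {n : ℕ} (p : HO n) (i : Fin n) : ℤ :=
  (if p.2 i then -1 else 1) * ((p.1 i : ℕ) + 1)

lemma sval_coe_succ {n : ℕ} (p : HO n) (i : Fin n) :
    sval p (((i : ℕ) : ℤ) + 1) = wv p i := by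
  have h : 1 ≤ ((i:ℕ):ℤ) + 1 ∧ ((i:ℕ):ℤ) + 1 ≤ (n:ℤ) := by
    have := i.isLt; constructor <;> omega
  rw [sval, dif_pos h]
  have : ((((i:ℕ):ℤ) + 1 - 1).toNat) = (i:ℕ) := by omega
  simp only [this, wv, Fin.eta]

lemma sval_coe {n : ℕ} (p : HO n) (i : Fin n) :
    sval p ((i : ℕ) : ℤ) = (Fin.cons 0 (wv p) : Fin (n+1) → ℤ) i.castSucc := by
  rcases Nat.eq_zero_or_pos (i:ℕ) with h0 | hpos
  · have : i.castSucc = 0 := by ext; simpa using h0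
    rw [this, Fin.cons_zero, sval]
    rw [dif_neg (by omega), dif_neg (by omega)]
  · obtain ⟨k, hk⟩ : ∃ k : ℕ, (i:ℕ) = k + 1 := ⟨(i:ℕ)-1, by omega⟩
    have hkn : k < n := by omega
    have : i.castSucc = Fin.succ ⟨k, hkn⟩ := by
      ext; simp [hk]
    rw [this, Fin.cons_succ]
    have := sval_coe_succ p ⟨k, hkn⟩
    rw [show ((i:ℕ):ℤ) = ((k:ℕ):ℤ) + 1 by omega] at *
    rw [← this]

lemma desB_eq_desF {n : ℕ} (p : HO n) :
    desB p = (Finset.univ.filter (fun i : Fin n =>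
      (Fin.cons 0 (wv p) : Fin (n+1) → ℤ) i.succ <
      (Fin.cons 0 (wv p) : Fin (n+1) → ℤ) i.castSucc)).card := by
  unfold desB
  congr 1
  apply Finset.filter_congr
  intro i _
  rw [sval_coe_succ, sval_coe]
  simp [Fin.cons_succ]

def desL : List ℤ → ℕ
  | a :: b :: l => (if b < a then 1 else 0) + desL (b :: l)
  | _ => 0

lemma desL_nil : desL [] = 0 := rfl
lemma desL_single (a : ℤ) : desL [a] = 0 := rfl
lemma desL_cons_cons (a b : ℤ) (l : List ℤ) :
    desL (a :: b :: l) = (if b < a then 1 else 0) + desL (b :: l) := rfl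

lemma desF_eq_desL : ∀ {n : ℕ} (u : Fin (n+1) → ℤ),
    (Finset.univ.filter (fun i : Fin n => u i.succ < u i.castSucc)).card
      = desL (List.ofFn u)
  | 0, u => by simp [List.ofFn_succ, desL]
  | (n+1), u => by
    rw [Finset.card_filter, Fin.sum_univ_succ]
    have key := desF_eq_desL (fun i => u i.succ)
    rw [Finset.card_filter] at key
    simp only [← Fin.succ_castSucc]
    simp only [List.ofFn_succ] at key ⊢
    rw [desL_cons_cons]
    simp only [Fin.castSucc_zero]
    rw [key]
    rfl

def wl {n : ℕ} (p : HO n) : List ℤ := List.ofFn (wv p)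

lemma desB_eq {n : ℕ} (p : HO n) : desB p = desL ((0:ℤ) :: wl p) := by
  rw [desB_eq_desF, wl]
  have := desF_eq_desL (Fin.cons 0 (wv p) : Fin (n+1) → ℤ)
  rw [this, List.ofFn_succ]
  simp [Fin.cons_succ]

lemma sval_one {n : ℕ} (p : HO (n+1)) : sval p 1 = wv p 0 := by
  have := sval_coe_succ p 0
  simpa using this

lemma wv_bound {n : ℕ} (p : HO n) (i : Fin n) :
    (1 ≤ wv p i ∧ wv p i ≤ n) ∨ (1 ≤ -wv p i ∧ -wv p i ≤ n) := by
  unfold wv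
  have := (p.1 i).isLt
  rcases h : p.2 i with _ | _ <;> simp <;> omega

lemma wv_inj {n : ℕ} (p q : HO n) (h : wv p = wv q) : p = q := by
  have habs : ∀ i, ((p.1 i : ℕ) : ℤ) + 1 = ((q.1 i : ℕ) : ℤ) + 1 := by
    intro i
    have := congrFun h i
    unfold wv at this
    rcases hp : p.2 i with _|_ <;> rcases hq : q.2 i with _|_ <;>
      rw [hp, hq] at this <;> simp at this <;> omega
  have h1 : p.1 = q.1 := by
    apply Equiv.ext; intro i
    have := habs i; ext; omega
  have h2 : p.2 = q.2 := by
    funext i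
    have := congrFun h i
    unfold wv at this
    have hi := habs i
    rcases hp : p.2 i with _|_ <;> rcases hq : q.2 i with _|_ <;>
      rw [hp, hq] at this <;> simp at this <;> omega
  exact Prod.ext h1 h2

def xval (n : ℕ) (s : Bool) : ℤ := if s then -((n:ℤ)+1) else (n:ℤ)+1

def ins {n : ℕ} (p : HO n) (j : Fin (n+1)) (s : Bool) : HO (n+1) :=
  ⟨(finSuccEquiv' j).trans ((Equiv.optionCongr p.1).trans (finSuccEquiv' (Fin.last n)).symm),
   j.insertNth s p.2⟩

lemma ins_fst_at {n : ℕ} (p : HO n) (j : Fin (n+1)) (s : Bool) :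
    (ins p j s).1 j = Fin.last n := by
  simp [ins, finSuccEquiv'_at]

lemma ins_fst_succAbove {n : ℕ} (p : HO n) (j : Fin (n+1)) (s : Bool) (k : Fin n) :
    (ins p j s).1 (j.succAbove k) = (p.1 k).castSucc := by
  simp [ins, finSuccEquiv'_succAbove, Fin.succAbove_last]

lemma ins_snd_at {n : ℕ} (p : HO n) (j : Fin (n+1)) (s : Bool) :
    (ins p j s).2 j = s :=
  @Fin.insertNth_apply_same _ (fun _ => Bool) j s p.2

lemma ins_snd_succAbove {n : ℕ} (p : HO n) (j : Fin (n+1)) (s : Bool) (k : Fin n) :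
    (ins p j s).2 (j.succAbove k) = p.2 k :=
  @Fin.insertNth_apply_succAbove _ (fun _ => Bool) j s p.2 k

lemma wv_ins {n : ℕ} (p : HO n) (j : Fin (n+1)) (s : Bool) :
    wv (ins p j s) = (j.insertNth (xval n s) (wv p) : Fin (n+1) → ℤ) := by
  funext i
  rcases eq_or_ne i j with rfl | hij
  · rw [Fin.insertNth_apply_same]
    unfold wv
    rw [ins_fst_at, ins_snd_at]
    rcases s <;> simp [xval, Fin.val_last]
  · obtain ⟨k, rfl⟩ := Fin.exists_succAbove_eq hij
    rw [Fin.insertNth_apply_succAbove]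
    unfold wv
    rw [ins_fst_succAbove, ins_snd_succAbove, Fin.coe_castSucc]

lemma insertNth_succ {n : ℕ} (j : Fin (n+1)) (x : ℤ) (v : Fin (n+1) → ℤ) :
    (j.succ.insertNth x v : Fin (n+2) → ℤ)
      = Fin.cons (v 0) (j.insertNth x (fun k => v k.succ) : Fin (n+1) → ℤ) := by
  funext i
  induction i using Fin.cases with
  | zero =>
    rw [Fin.cons_zero]
    have h0 : j.succ.succAbove 0 = 0 := by
      rw [Fin.succAbove_of_castSucc_lt]
      · rfl
      · simp [Fin.castSucc_zero, Fin.succ_pos]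
    conv_lhs => rw [← h0]
    exact @Fin.insertNth_apply_succAbove _ (fun _ => ℤ) j.succ x v 0
  | succ k =>
    rw [Fin.cons_succ]
    rcases eq_or_ne k j with rfl | hkj
    · rw [Fin.insertNth_apply_same, Fin.insertNth_apply_same]
    · obtain ⟨k'', rfl⟩ := Fin.exists_succAbove_eq hkj
      rw [Fin.insertNth_apply_succAbove]
      have : (j.succAbove k'').succ = j.succ.succAbove k''.succ :=
        (Fin.succ_succAbove_succ j k'').symm
      rw [this, Fin.insertNth_apply_succAbove]

lemma ofFn_insertNth : ∀ {n : ℕ} (j : Fin (n+1)) (x : ℤ) (v : Fin n → ℤ),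
    List.ofFn (j.insertNth x v : Fin (n+1) → ℤ) = (List.ofFn v).insertIdx j x
  | 0, j, x, v => by
    have : j = 0 := by ext; omega
    subst this
    rw [Fin.insertNth_zero']
    simp [List.ofFn_succ]
  | (n+1), j, x, v => by
    induction j using Fin.cases with
    | zero =>
      rw [Fin.insertNth_zero']
      simp [List.ofFn_succ]
    | succ j' =>
      rw [insertNth_succ]
      rw [List.ofFn_succ, Fin.cons_zero]
      simp only [Fin.cons_succ]
      rw [ofFn_insertNth j' x (fun k => v k.succ)]
      rw [List.ofFn_succ (f := v)]
      have : ((j'.succ : Fin (n+2)) : ℕ) = (j' : ℕ) + 1 := rfl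
      rw [this, List.insertIdx_succ_cons]

lemma wl_ins {n : ℕ} (p : HO n) (j : Fin (n+1)) (s : Bool) :
    wl (ins p j s) = (wl p).insertIdx j (xval n s) := by
  rw [wl, wv_ins, ofFn_insertNth, wl]

lemma wl_length {n : ℕ} (p : HO n) : (wl p).length = n := by simp [wl]

lemma wl_mem_bound {n : ℕ} (p : HO n) (y : ℤ) (hy : y ∈ wl p) :
    y < (n:ℤ)+1 ∧ -((n:ℤ)+1) < y := by
  rw [wl, List.mem_ofFn] at hy
  obtain ⟨i, rfl⟩ := hy
  have := wv_bound p i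
  constructor <;> omega

lemma ins_injective {n : ℕ} :
    Function.Injective (fun q : HO n × Fin (n+1) × Bool => ins q.1 q.2.1 q.2.2) := by
  rintro ⟨p, j, s⟩ ⟨p', j', s'⟩ h
  simp only at h
  have hw : (j.insertNth (xval n s) (wv p) : Fin (n+1) → ℤ)
      = (j'.insertNth (xval n s') (wv p') : Fin (n+1) → ℤ) := by
    rw [← wv_ins, ← wv_ins, h]
  have hxs : ∀ s : Bool, xval n s = (n:ℤ)+1 ∨ xval n s = -((n:ℤ)+1) := by
    intro s; rcases s <;> simp [xval]
  have hjj : j = j' := by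
    by_contra hne
    obtain ⟨k, hk⟩ := Fin.exists_succAbove_eq hne
    have h1 := congrFun hw j
    rw [Fin.insertNth_apply_same] at h1
    rw [← hk, @Fin.insertNth_apply_succAbove _ (fun _ => ℤ)] at h1
    have := wv_bound p' k
    rcases hxs s with h2 | h2 <;> omega
  subst hjj
  have hss : s = s' := by
    have h1 := congrFun hw j
    rw [Fin.insertNth_apply_same, Fin.insertNth_apply_same] at h1
    rcases s <;> rcases s' <;> simp [xval] at h1 ⊢ <;> omega
  subst hss
  have hpp : p = p' := by
    apply wv_inj
    funext k
    have h1 := congrFun hw (j.succAbove k)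
    rwa [Fin.insertNth_apply_succAbove, Fin.insertNth_apply_succAbove] at h1
  rw [hpp]

lemma ins_bijective {n : ℕ} :
    Function.Bijective (fun q : HO n × Fin (n+1) × Bool => ins q.1 q.2.1 q.2.2) := by
  rw [Fintype.bijective_iff_injective_and_card]
  refine ⟨ins_injective, ?_⟩
  simp [Fintype.card_prod, Fintype.card_perm, Fintype.card_fun, Nat.factorial_succ,
    pow_succ]
  ring

lemma sumIns_gt (x : ℤ) : ∀ (v : List ℤ), (∀ y ∈ v, y < x) →
    ∑ j ∈ Finset.range (v.length+1), (X:ℚ[X]) ^ desL (v.insertIdx j x)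
      = ((desL v : ℚ[X]) + 1) * X ^ (desL v)
        + ((v.length : ℚ[X]) - (desL v : ℚ[X])) * X ^ (desL v + 1)
  | [], _ => by simp [desL]
  | [a], hx => by
      have ha : a < x := hx a (by simp)
      have h2 : ¬ (x < a) := by omega
      simp [Finset.sum_range_succ, desL_cons_cons, desL, ha, h2]
      ring
  | (a :: b :: w'), hx => by
      have ha : a < x := hx a (by simp)
      have hb : b < x := hx b (by simp)
      have hxa : ¬ (x < a) := by omega
      have ihw := sumIns_gt x (b :: w') (fun y hy => hx y (by simp [hy]))
      simp only [List.length_cons] at ihw ⊢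
      rw [Finset.sum_range_succ'] at ihw ⊢
      simp only [List.insertIdx_zero, List.insertIdx_succ_cons] at ihw ⊢
      rw [Finset.sum_range_succ']
      simp only [List.insertIdx_zero, List.insertIdx_succ_cons]
      by_cases hba : b < a
      · simp only [desL_cons_cons, if_pos hba, if_pos hb, if_pos ha,
          if_neg hxa, zero_add, pow_add, pow_zero, one_mul] at ihw ⊢
        push_cast at ihw ⊢
        rw [← Finset.mul_sum]
        linear_combination (X:ℚ[X]) * ihw
      · simp only [desL_cons_cons, if_neg hba, if_pos hb, if_pos ha,
          if_neg hxa, zero_add, pow_add, pow_zero, one_mul] at ihw ⊢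
        push_cast at ihw ⊢
        linear_combination ihw

lemma sumIns_lt (x : ℤ) : ∀ (v : List ℤ), (∀ y ∈ v, x < y) →
    ∑ j ∈ Finset.range (v.length+1), (X:ℚ[X]) ^ desL (v.insertIdx j x)
      = ((desL v : ℚ[X]) + 1) * X ^ (desL v)
        + ((v.length : ℚ[X]) - (desL v : ℚ[X])) * X ^ (desL v + 1)
  | [], _ => by simp [desL]
  | [a], hx => by
      have ha : x < a := hx a (by simp)
      have h2 : ¬ (a < x) := by omega
      simp [Finset.sum_range_succ, desL_cons_cons, desL, ha, h2]
  | (a :: b :: w'), hx => by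
      have ha : x < a := hx a (by simp)
      have hb : x < b := hx b (by simp)
      have hax : ¬ (a < x) := by omega
      have hbx : ¬ (b < x) := by omega
      have ihw := sumIns_lt x (b :: w') (fun y hy => hx y (by simp [hy]))
      simp only [List.length_cons] at ihw ⊢
      rw [Finset.sum_range_succ'] at ihw ⊢
      simp only [List.insertIdx_zero, List.insertIdx_succ_cons] at ihw ⊢
      rw [Finset.sum_range_succ']
      simp only [List.insertIdx_zero, List.insertIdx_succ_cons]
      by_cases hba : b < a
      · simp only [desL_cons_cons, if_pos hba, if_neg hbx, if_neg hax,
          if_pos ha, zero_add, pow_add, pow_zero, one_mul] at ihw ⊢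
        push_cast at ihw ⊢
        rw [← Finset.mul_sum]
        linear_combination (X:ℚ[X]) * ihw
      · simp only [desL_cons_cons, if_neg hba, if_neg hbx, if_neg hax,
          if_pos ha, zero_add, pow_add, pow_zero, one_mul] at ihw ⊢
        push_cast at ihw ⊢
        linear_combination ihw

noncomputable def Apoly (n : ℕ) : ℚ[X] := ∑ p : HO n, X ^ desL (wl p)

lemma xval_false (n : ℕ) : xval n false = (n:ℤ)+1 := rfl
lemma xval_true (n : ℕ) : xval n true = -((n:ℤ)+1) := rfl

lemma Acomb (N : ℕ) : Apoly (N+1) = ∑ p : HO N,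
    ((2*(desL (wl p) : ℚ[X]) + 2) * X ^ (desL (wl p))
      + (2*(N:ℚ[X]) - 2*(desL (wl p) : ℚ[X])) * X ^ (desL (wl p) + 1)) := by
  have hbij := Fintype.sum_bijective _ (ins_bijective (n:=N))
    (fun q : HO N × Fin (N+1) × Bool => (X:ℚ[X]) ^ desL (wl (ins q.1 q.2.1 q.2.2)))
    (fun q : HO (N+1) => (X:ℚ[X]) ^ desL (wl q)) (fun q => rfl)
  rw [Apoly, ← hbij, Fintype.sum_prod_type]
  apply Finset.sum_congr rfl
  intro p _
  rw [Fintype.sum_prod_type_right]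
  have hlen : (wl p).length = N := wl_length p
  have hsum : ∀ s : Bool, ∑ j : Fin (N+1), (X:ℚ[X]) ^ desL (wl (ins p j s))
      = ((desL (wl p) : ℚ[X]) + 1) * X ^ (desL (wl p))
        + (((wl p).length : ℚ[X]) - (desL (wl p) : ℚ[X])) * X ^ (desL (wl p) + 1) := by
    intro s
    have : ∀ j : Fin (N+1), wl (ins p j s) = (wl p).insertIdx (j:ℕ) (xval N s) :=
      fun j => wl_ins p j s
    simp only [this]
    rw [Fin.sum_univ_eq_sum_range (fun i => (X:ℚ[X]) ^ desL ((wl p).insertIdx i (xval N s)))]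
    rw [show N + 1 = (wl p).length + 1 by rw [hlen]]
    rcases s with _ | _
    · exact sumIns_gt _ _ (fun y hy => by
        have := wl_mem_bound p y hy; rw [xval_false]; omega)
    · exact sumIns_lt _ _ (fun y hy => by
        have := wl_mem_bound p y hy; rw [xval_true]; omega)
  rw [Fintype.sum_bool, hsum true, hsum false, hlen]
  push_cast
  ring

lemma X_mul_deriv_pow (d : ℕ) : (X:ℚ[X]) * derivative (X^d) = (d:ℚ[X]) * X^d := by
  cases d with
  | zero => simp
  | succ d =>
    rw [Polynomial.derivative_X_pow]
    push_cast
    ring_nf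
    simp [pow_succ]
    ring

lemma Apoly_rec (N : ℕ) :
    Apoly (N+1) = 2*(1-X)*(X * derivative (Apoly N)) + (2 + 2*(N:ℚ[X])*X) * Apoly N := by
  rw [Acomb, Apoly, Polynomial.derivative_sum]
  rw [Finset.mul_sum]
  rw [Finset.mul_sum, Finset.mul_sum, ← Finset.sum_add_distrib]
  apply Finset.sum_congr rfl
  intro p _
  linear_combination (-(2*((1:ℚ[X])-X))) * X_mul_deriv_pow (desL (wl p))

lemma ins_sval_one_zero {n : ℕ} (p : HO n) (s : Bool) :
    sval (ins p 0 s) 1 = xval n s := by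
  rw [sval_one, wv_ins]
  exact @Fin.insertNth_apply_same _ (fun _ => ℤ) 0 (xval n s) (wv p)

lemma ins_sval_one_succ {n : ℕ} (p : HO (n+1)) (k : Fin (n+1)) (s : Bool) :
    sval (ins p k.succ s) 1 = sval p 1 := by
  rw [sval_one, wv_ins, sval_one]
  have h0 : k.succ.succAbove 0 = 0 := by
    rw [Fin.succAbove_of_castSucc_lt]
    · rfl
    · simp [Fin.castSucc_zero, Fin.succ_pos]
  conv_lhs => rw [← h0]
  exact @Fin.insertNth_apply_succAbove _ (fun _ => ℤ) k.succ (xval (n+1) s) (wv p) 0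

lemma sval_one_bound {n : ℕ} (p : HO (n+1)) :
    sval p 1 < (n:ℤ)+1+1 ∧ -((n:ℤ)+1+1) < sval p 1 := by
  rw [sval_one]
  have := wv_bound p 0
  constructor <;> omega

lemma desL_cons_head (z : ℤ) (l : List ℤ) (h : ∀ y ∈ l, ¬ y < z) : desL (z :: l) = desL l := by
  cases l with
  | nil => rfl
  | cons c t => rw [desL_cons_cons, if_neg (h c (by simp)), zero_add]

lemma Ccomb (n : ℕ) : Bpoly (n+1) (-(((n:ℕ):ℤ)+1)) = X * Apoly n := by
  rw [Bpoly, Finset.sum_filter]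
  have hbij := Fintype.sum_bijective _ (ins_bijective (n:=n))
    (fun q : HO n × Fin (n+1) × Bool =>
      if sval (ins q.1 q.2.1 q.2.2) 1 = -(((n:ℕ):ℤ)+1)
      then (X:ℚ[X]) ^ desB (ins q.1 q.2.1 q.2.2) else 0)
    (fun q : HO (n+1) => if sval q 1 = -(((n:ℕ):ℤ)+1) then (X:ℚ[X]) ^ desB q else 0)
    (fun q => rfl)
  rw [← hbij, Fintype.sum_prod_type]
  rw [Apoly, Finset.mul_sum]
  apply Finset.sum_congr rfl
  intro p _
  rw [Fintype.sum_prod_type, Fin.sum_univ_succ]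
  have hzero : ∀ s, sval (ins p 0 s) 1 = xval n s := fun s => ins_sval_one_zero p s
  have hsucc : ∀ (k : Fin n) s, sval (ins p k.succ s) 1 = sval p 1 := by
    intro k s
    cases n with
    | zero => exact absurd k.isLt (by omega)
    | succ n' => exact ins_sval_one_succ p k s
  have hterm0 : ∀ s : Bool, (if sval (ins p 0 s) 1 = -(((n:ℕ):ℤ)+1)
      then (X:ℚ[X]) ^ desB (ins p 0 s) else 0)
      = if s then (X:ℚ[X]) ^ desB (ins p 0 true) else 0 := by
    intro s
    rcases s with _ | _
    · rw [if_neg (by rw [hzero, xval_false]; omega), if_neg (by simp)]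
    · rw [if_pos (by rw [hzero, xval_true]), if_pos rfl]
  have htermsucc : ∀ (k : Fin n) (s : Bool), (if sval (ins p k.succ s) 1 = -(((n:ℕ):ℤ)+1)
      then (X:ℚ[X]) ^ desB (ins p k.succ s) else 0) = 0 := by
    intro k s
    rw [if_neg]
    rw [hsucc]
    cases n with
    | zero => exact absurd k.isLt (by omega)
    | succ n' =>
      have := sval_one_bound p
      intro hcon
      omega
  simp only [hterm0, htermsucc, Finset.sum_const_zero, add_zero]
  rw [Fintype.sum_bool, if_pos rfl, if_neg (by simp), add_zero]
  have hdes : desB (ins p 0 true) = 1 + desL (wl p) := by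
    rw [desB_eq, wl_ins]
    have h0 : ((0 : Fin (n+1)) : ℕ) = 0 := rfl
    rw [h0, List.insertIdx_zero, desL_cons_cons, if_pos (by rw [xval_true]; omega)]
    rw [desL_cons_head]
    intro y hy
    have := wl_mem_bound p y hy
    rw [xval_true]
    omega
  rw [hdes, pow_add, pow_one]

lemma wl_head {n : ℕ} (p : HO (n+1)) :
    wl p = wv p 0 :: List.ofFn (fun i => wv p i.succ) := List.ofFn_succ

lemma sumIns_first_neg (n' : ℕ) (p : HO (n'+1)) (hneg : wv p 0 < 0) :
    ∑ k : Fin (n'+1), ∑ s : Bool, (X:ℚ[X]) ^ desB (ins p k.succ s)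
      = (2*(desL (wl p) : ℚ[X]) + 1) * X ^ (desL (wl p) + 1)
        + (2*(((n'+1 : ℕ)):ℚ[X]) - 1 - 2*(desL (wl p):ℚ[X])) * X ^ (desL (wl p) + 2) := by
  have hdes : ∀ (k : Fin (n'+1)) (s : Bool),
      desB (ins p k.succ s) = 1 + desL ((wl p).insertIdx ((k:ℕ)+1) (xval (n'+1) s)) := by
    intro k s
    rw [desB_eq, wl_ins]
    have : ((k.succ : Fin (n'+2)) : ℕ) = (k:ℕ)+1 := rfl
    rw [this, wl_head, List.insertIdx_succ_cons, desL_cons_cons, if_pos hneg]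
  have hcons : ∀ x : ℤ, desL (x :: wl p) = (if wv p 0 < x then 1 else 0) + desL (wl p) := by
    intro x
    rw [wl_head, desL_cons_cons, ← wl_head]
  have hx : ∀ y ∈ wl p, y < (((n'+1:ℕ)):ℤ)+1 ∧ -((((n'+1:ℕ)):ℤ)+1) < y :=
    fun y hy => wl_mem_bound p y hy
  have hsplit : ∀ x : ℤ,
      (∑ k : Fin (n'+1), (X:ℚ[X]) ^ desL ((wl p).insertIdx ((k:ℕ)+1) x))
        + X ^ desL (x :: wl p)
      = ∑ j ∈ Finset.range ((wl p).length + 1), (X:ℚ[X]) ^ desL ((wl p).insertIdx j x) := by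
    intro x
    rw [show (x :: wl p) = (wl p).insertIdx 0 x from List.insertIdx_zero.symm,
      Fin.sum_univ_eq_sum_range (fun i => (X:ℚ[X]) ^ desL ((wl p).insertIdx (i+1) x)),
      wl_length,
      ← Finset.sum_range_succ' (fun j => (X:ℚ[X]) ^ desL (List.insertIdx (wl p) j x)) (n'+1)]
  have hlen : (wl p).length = n'+1 := wl_length p
  have hneg0 : wv p 0 < 0 := hneg
  -- sum over Bool
  rw [Finset.sum_comm]
  rw [Fintype.sum_bool]
  have htrue := hsplit (xval (n'+1) true)
  have hfalse := hsplit (xval (n'+1) false)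
  have hgt := sumIns_gt (xval (n'+1) false) (wl p)
    (fun y hy => by have := hx y hy; rw [xval_false]; omega)
  have hlt := sumIns_lt (xval (n'+1) true) (wl p)
    (fun y hy => by have := hx y hy; rw [xval_true]; omega)
  have hct : desL (xval (n'+1) true :: wl p) = desL (wl p) := by
    rw [hcons, if_neg (by have := wv_bound p 0; rw [xval_true]; push_cast; omega), zero_add]
  have hcf : desL (xval (n'+1) false :: wl p) = 1 + desL (wl p) := by
    rw [hcons, if_pos (by rw [xval_false]; omega)]
  simp only [hdes]
  rw [hct] at htrue
  rw [hcf] at hfalse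
  rw [hgt, hlen] at hfalse
  rw [hlt, hlen] at htrue
  have e1 : ∑ k : Fin (n'+1), (X:ℚ[X]) ^ (1 + desL ((wl p).insertIdx ((k:ℕ)+1) (xval (n'+1) true)))
      = X * ∑ k : Fin (n'+1), (X:ℚ[X]) ^ (desL ((wl p).insertIdx ((k:ℕ)+1) (xval (n'+1) true))) := by
    rw [Finset.mul_sum]; apply Finset.sum_congr rfl; intro k _; rw [pow_add, pow_one]
  have e2 : ∑ k : Fin (n'+1), (X:ℚ[X]) ^ (1 + desL ((wl p).insertIdx ((k:ℕ)+1) (xval (n'+1) false)))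
      = X * ∑ k : Fin (n'+1), (X:ℚ[X]) ^ (desL ((wl p).insertIdx ((k:ℕ)+1) (xval (n'+1) false))) := by
    rw [Finset.mul_sum]; apply Finset.sum_congr rfl; intro k _; rw [pow_add, pow_one]
  rw [e1, e2]
  push_cast at htrue hfalse ⊢
  linear_combination (X:ℚ[X]) * htrue + (X:ℚ[X]) * hfalse

lemma desB_head_neg {n : ℕ} (p : HO (n+1)) (hneg : wv p 0 < 0) :
    desB p = 1 + desL (wl p) := by
  rw [desB_eq, wl_head, desL_cons_cons, if_pos hneg, ← wl_head]

lemma sval_zero (p : HO 0) : sval p 1 = 0 := by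
  rw [sval, dif_neg (by omega), dif_neg (by omega)]

lemma Rcomb (n m : ℕ) (hm1 : 1 ≤ m) (hmn : m ≤ n) :
    Bpoly (n+1) (-(m:ℤ)) = ∑ p : HO n,
      if sval p 1 = -(m:ℤ) then
        ((2*(desB p : ℚ[X]) - 1) * X ^ (desB p)
          + (2*(n:ℚ[X]) + 1 - 2*(desB p : ℚ[X])) * X ^ (desB p + 1))
      else 0 := by
  rw [Bpoly, Finset.sum_filter]
  have hbij := Fintype.sum_bijective _ (ins_bijective (n:=n))
    (fun q : HO n × Fin (n+1) × Bool =>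
      if sval (ins q.1 q.2.1 q.2.2) 1 = -(m:ℤ)
      then (X:ℚ[X]) ^ desB (ins q.1 q.2.1 q.2.2) else 0)
    (fun q : HO (n+1) => if sval q 1 = -(m:ℤ) then (X:ℚ[X]) ^ desB q else 0)
    (fun q => rfl)
  rw [← hbij, Fintype.sum_prod_type]
  apply Finset.sum_congr rfl
  intro p _
  rw [Fintype.sum_prod_type, Fin.sum_univ_succ]
  have h0 : ∀ s : Bool, (if sval (ins p 0 s) 1 = -(m:ℤ)
      then (X:ℚ[X]) ^ desB (ins p 0 s) else 0) = 0 := by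
    intro s
    rw [if_neg]
    rw [ins_sval_one_zero]
    rcases s with _ | _
    · rw [xval_false]; omega
    · rw [xval_true]; omega
  simp only [h0, Finset.sum_const_zero, zero_add]
  by_cases hc : sval p 1 = -(m:ℤ)
  · rw [if_pos hc]
    cases n with
    | zero => exact absurd hc (by rw [sval_zero]; omega)
    | succ n' =>
      have hneg : wv p 0 < 0 := by
        rw [← sval_one, hc]; omega
      have hcond : ∀ (k : Fin (n'+1)) (s : Bool),
          (if sval (ins p k.succ s) 1 = -(m:ℤ)
            then (X:ℚ[X]) ^ desB (ins p k.succ s) else 0)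
          = (X:ℚ[X]) ^ desB (ins p k.succ s) := by
        intro k s
        rw [if_pos (by rw [ins_sval_one_succ, hc])]
      simp only [hcond]
      have := sumIns_first_neg n' p hneg
      rw [show ∑ k : Fin (n'+1), ∑ s : Bool, (X:ℚ[X]) ^ desB (ins p k.succ s)
          = ∑ k : Fin (n'+1), (X:ℚ[X]) ^ desB (ins p k.succ true)
            + ∑ k : Fin (n'+1), (X:ℚ[X]) ^ desB (ins p k.succ false) from by
        rw [← Finset.sum_add_distrib]
        exact Finset.sum_congr rfl (fun k _ => Fintype.sum_bool _)] at this
      rw [show (∑ k : Fin (n'+1), ∑ s : Bool, (X:ℚ[X]) ^ desB (ins p k.succ s))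
          = (2*(desL (wl p) : ℚ[X]) + 1) * X ^ (desL (wl p) + 1)
            + (2*(((n'+1 : ℕ)):ℚ[X]) - 1 - 2*(desL (wl p):ℚ[X])) * X ^ (desL (wl p) + 2)
        from sumIns_first_neg n' p hneg]
      rw [desB_head_neg p hneg]
      push_cast
      ring
  · rw [if_neg hc]
    cases n with
    | zero => simp
    | succ n' =>
      have hcond : ∀ (k : Fin (n'+1)) (s : Bool),
          (if sval (ins p k.succ s) 1 = -(m:ℤ)
            then (X:ℚ[X]) ^ desB (ins p k.succ s) else 0) = 0 := by
        intro k s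
        rw [if_neg (by rw [ins_sval_one_succ]; exact hc)]
      simp only [hcond, Finset.sum_const_zero]

lemma Bpoly_rec (n m : ℕ) (hm1 : 1 ≤ m) (hmn : m ≤ n) :
    Bpoly (n+1) (-(m:ℤ)) = 2*(1-X)*(X * derivative (Bpoly n (-(m:ℤ))))
      + ((2*(n:ℚ[X])+1)*X - 1) * Bpoly n (-(m:ℤ)) := by
  rw [Rcomb n m hm1 hmn, Bpoly, Finset.sum_filter, Polynomial.derivative_sum,
    Finset.mul_sum, Finset.mul_sum, Finset.mul_sum, ← Finset.sum_add_distrib]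
  apply Finset.sum_congr rfl
  intro p _
  by_cases hc : sval p 1 = -(m:ℤ)
  · simp only [if_pos hc]
    linear_combination (-(2*((1:ℚ[X])-X))) * X_mul_deriv_pow (desB p)
  · simp only [if_neg hc]
    simp

noncomputable def Tser (j : ℕ) : PowerSeries ℚ :=
  PowerSeries.mk fun k => (2 * (k:ℚ) + 2)^j

noncomputable def Sser (a b : ℕ) : PowerSeries ℚ :=
  PowerSeries.mk fun k : ℕ => if k = 0 then 0 else ((2 * k - 1 : ℚ) ^ a * (2 * k : ℚ) ^ b)

lemma coeff_X_mul_d (f : PowerSeries ℚ) (k : ℕ) :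
    PowerSeries.coeff k (PowerSeries.X * PowerSeries.derivativeFun f)
      = (k:ℚ) * PowerSeries.coeff k f := by
  cases k with
  | zero => simp
  | succ k =>
    rw [PowerSeries.coeff_succ_X_mul, show PowerSeries.derivativeFun f = PowerSeries.derivative ℚ f from rfl,
      PowerSeries.coeff_derivative]
    push_cast
    ring

lemma coe_X_mul_deriv (P : ℚ[X]) :
    ((X * derivative P : ℚ[X]) : PowerSeries ℚ)
      = PowerSeries.X * PowerSeries.derivativeFun (P : PowerSeries ℚ) := by
  rw [Polynomial.coe_mul, Polynomial.coe_X, ← PowerSeries.derivative_coe]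
  rfl

lemma deriv_one_sub : PowerSeries.derivativeFun (1 - PowerSeries.X : PowerSeries ℚ) = -1 := by
  ext k
  rw [show PowerSeries.derivativeFun (1 - PowerSeries.X : PowerSeries ℚ)
    = PowerSeries.derivative ℚ (1 - PowerSeries.X) from rfl, PowerSeries.coeff_derivative]
  rw [map_sub]
  cases k with
  | zero => simp
  | succ k => simp [PowerSeries.coeff_one, PowerSeries.coeff_X]

lemma deriv_one_sub_pow : ∀ j : ℕ,
    PowerSeries.derivativeFun ((1 - PowerSeries.X : PowerSeries ℚ)^(j+1))
      = -(((j:PowerSeries ℚ)+1) * (1 - PowerSeries.X)^j)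
  | 0 => by simpa using deriv_one_sub
  | (j+1) => by
    rw [pow_succ, PowerSeries.derivativeFun_mul, deriv_one_sub_pow j, deriv_one_sub,
      smul_eq_mul, smul_eq_mul]
    push_cast
    ring

lemma coeff_two_mul (f : PowerSeries ℚ) (k : ℕ) :
    PowerSeries.coeff k (2 * f) = 2 * PowerSeries.coeff k f := by
  rw [show (2:PowerSeries ℚ) = PowerSeries.C (2:ℚ) from (map_ofNat (PowerSeries.C (R := ℚ)) 2).symm,
    PowerSeries.coeff_C_mul]

lemma Tstep (j : ℕ) : (2:PowerSeries ℚ) * Tser j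
    + 2 * (PowerSeries.X * PowerSeries.derivativeFun (Tser j)) = Tser (j+1) := by
  ext k
  rw [map_add, coeff_two_mul, coeff_two_mul, coeff_X_mul_d]
  simp only [Tser, PowerSeries.coeff_mk]
  push_cast
  ring

lemma Sstep (a b : ℕ) : 2 * (PowerSeries.X * PowerSeries.derivativeFun (Sser a b))
    - Sser a b = Sser (a+1) b := by
  ext k
  rw [map_sub, coeff_two_mul, coeff_X_mul_d]
  simp only [Sser, PowerSeries.coeff_mk]
  cases k with
  | zero => simp
  | succ k =>
    rw [if_neg (by omega), if_neg (by omega)]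
    push_cast
    ring

lemma XTser (b : ℕ) : PowerSeries.X * Tser b = Sser 0 b := by
  ext k
  cases k with
  | zero => simp [Sser]
  | succ k =>
    rw [PowerSeries.coeff_succ_X_mul]
    simp only [Tser, Sser, PowerSeries.coeff_mk, if_neg (Nat.succ_ne_zero k)]
    push_cast
    ring

lemma one_sub_X_mul_T0 : ((1 : PowerSeries ℚ) - PowerSeries.X) * Tser 0 = 1 := by
  ext k
  rw [sub_mul, one_mul, map_sub]
  cases k with
  | zero => simp [Tser]
  | succ k =>
    rw [PowerSeries.coeff_succ_X_mul]
    simp [Tser, PowerSeries.coeff_one]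

lemma coe_natCastP (N : ℕ) : (((N : ℚ[X]) : ℚ[X]) : PowerSeries ℚ) = (N : PowerSeries ℚ) := by
  rw [← Polynomial.coeToPowerSeries.ringHom_apply, map_natCast]

lemma coe_twoP : (((2 : ℚ[X])) : PowerSeries ℚ) = 2 := by
  rw [← Polynomial.coeToPowerSeries.ringHom_apply, map_ofNat]

lemma Apoly_zero : Apoly 0 = 1 := by
  rw [Apoly]
  have h1 : ∀ p : HO 0, (X:ℚ[X]) ^ desL (wl p) = 1 := by
    intro p
    have : wl p = [] := by simp [wl, List.ofFn_zero]
    rw [this, desL_nil, pow_zero]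
  rw [Finset.sum_congr rfl (fun p _ => h1 p), Finset.sum_const]
  simp

lemma Aclosed : ∀ j : ℕ, ((Apoly j : ℚ[X]) : PowerSeries ℚ)
    = (1 - PowerSeries.X)^(j+1) * Tser j
  | 0 => by
    rw [Apoly_zero, Polynomial.coe_one, pow_one, one_sub_X_mul_T0]
  | (j+1) => by
    rw [Apoly_rec j]
    simp only [Polynomial.coe_add, Polynomial.coe_mul, Polynomial.coe_sub,
      Polynomial.coe_one, Polynomial.coe_X, coe_twoP, coe_natCastP,
      ← PowerSeries.derivativeFun_coe]
    rw [Aclosed j]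
    rw [show ∀ f : PowerSeries ℚ, PowerSeries.derivative ℚ f = PowerSeries.derivativeFun f from fun _ => rfl, PowerSeries.derivativeFun_mul, deriv_one_sub_pow j, smul_eq_mul, smul_eq_mul]
    rw [← Tstep j]
    ring

lemma Bclosed : ∀ (d m' : ℕ),
    ((Bpoly (m'+1+d) (-((m':ℤ)+1)) : ℚ[X]) : PowerSeries ℚ)
      = (1 - PowerSeries.X)^(m'+1+d) * Sser d m'
  | 0, m' => by
    have hc := Ccomb m'
    rw [show m'+1+0 = m'+1 from rfl, hc, Polynomial.coe_mul, Polynomial.coe_X, Aclosed m',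
      ← XTser m']
    ring
  | (d+1), m' => by
    have hrec := Bpoly_rec (m'+1+d) (m'+1) (by omega) (by omega)
    rw [show (((m'+1:ℕ)):ℤ) = ((m':ℤ)+1) by push_cast; ring] at hrec
    rw [show m'+1+(d+1) = (m'+1+d)+1 from rfl, hrec]
    simp only [Polynomial.coe_add, Polynomial.coe_mul, Polynomial.coe_sub,
      Polynomial.coe_one, Polynomial.coe_X, coe_twoP, coe_natCastP,
      ← PowerSeries.derivativeFun_coe]
    rw [Bclosed d m']
    rw [show m'+1+d = (m'+d)+1 by omega]
    rw [show ∀ f : PowerSeries ℚ, PowerSeries.derivative ℚ f = PowerSeries.derivativeFun f from fun _ => rfl, PowerSeries.derivativeFun_mul, deriv_one_sub_pow (m'+d), smul_eq_mul, smul_eq_mul]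
    rw [← Sstep d m']
    push_cast
    ring

/-- Carlitz-type identity in `ℚ[[t]]`: for `i = -m` with `1 ≤ m ≤ n`,
`B_{n,i}(t) = (1-t)^n · ∑_{k ≥ 1} (2k-1)^{n-|i|} (2k)^{|i|-1} t^k`. -/
theorem stmt11 (n m : ℕ) (hm1 : 1 ≤ m) (hm2 : m ≤ n) :
    (Bpoly n (-(m : ℤ)) : PowerSeries ℚ) =
      (1 - PowerSeries.X) ^ n *
        PowerSeries.mk (fun k : ℕ =>
          if k = 0 then 0 else ((2 * k - 1 : ℚ) ^ (n - m) * (2 * k : ℚ) ^ (m - 1))) := by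
  obtain ⟨m', rfl⟩ : ∃ m', m = m'+1 := ⟨m-1, by omega⟩
  obtain ⟨d, rfl⟩ : ∃ d, n = m'+1+d := ⟨n - (m'+1), by omega⟩
  rw [show (-(((m'+1:ℕ)):ℤ)) = -((m':ℤ)+1) by push_cast; ring]
  rw [Bclosed d m']
  rw [show m'+1+d - (m'+1) = d by omega, show m'+1-1 = m' from rfl]
  rfl
end
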